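/- arXiv:2410.19505 — 8 statements merged into one kernel-verified Lean document; each statement's English description precedes it below -/
import Mathlib

section
/- Let n, l, d, p and s_i be as in the setup and let 1 ≤ i ≤ p and 1 ≤ j ≤ p with i ≠ j. Then the following are equivalent: (1) there exist x, y ∈ [1, l−1] such that, writing [a, b] = I_i(x) and [c, e] = I_j(y), one has c ≤ b, b ≤ e, and a ≤ c; (2) d = 2, l > 3, i is odd, and j = i + 1. (This is the combinatorial form of the paper's lemma: Hom_Λ(D_i, D_j) ≠ 0 if and only if d = 2, l > 3, i is odd and j = i + 1.) -/
open scoped Classical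

/-- The numerical setup under which the truncated linear Nakayama algebra `Λ(n,l)`
admits a `d`-cluster tilting subcategory, together with the integers `s i`
(defined by `2 * s i = …`). -/
structure NakSetup where
  n : ℤ
  l : ℤ
  d : ℤ
  p : ℤ
  s : ℤ → ℤ
  hl : 2 ≤ l
  hd : 2 ≤ d
  hp : 1 ≤ p
  hn : 2 * n = (p - 1) * ((d - 1) * l + 2) + l
  hcase : l = 2 ∨ (2 < l ∧ Even d ∧ Even p)
  hs_odd : ∀ i, 1 ≤ i → i ≤ p → Odd i → 2 * s i = (i - 1) * (d - 1) * l + 2 * i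
  hs_even : ∀ i, 1 ≤ i → i ≤ p → Even i → 2 * s i = (i - 1) * ((d - 1) * l + 2) + l

/-- The left endpoint of the interval `I_i(x)` supporting the unique indecomposable
module of length `x` on the `i`-th diagonal. -/
noncomputable def Ilo (S : NakSetup) (i x : ℤ) : ℤ :=
  if Odd i then S.s i else S.s i - x + 1

/-- The right endpoint of the interval `I_i(x)`. -/
noncomputable def Ihi (S : NakSetup) (i x : ℤ) : ℤ :=
  if Odd i then S.s i + x - 1 else S.s i

/-!
Writing `K = (d - 1) l + 2`, one has `2 s_i = (i - 1) K + 2` for odd `i` and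
`2 s_i = (i - 1) K + l` for even `i`. Diagonals of equal parity are therefore at least
`K ≥ l + 2` apart, too far for modules of length `< l` to meet as the Hom criterion
requires, and an even diagonal never maps to a later odd one. From an odd diagonal `i`
the first even diagonal starts `d l / 2` later; a morphism into it exists iff
`d l / 2 ≤ 2 l - 4`, which, as `d = 3` is excluded by the setup, means `d = 2` and `l > 3`.
-/

open Set

namespace NakSetup

variable (S : NakSetup)

def period : ℤ := (S.d - 1) * S.l + 2

lemma l_add_two_le_period : S.l + 2 ≤ S.period := by
  have : S.l ≤ (S.d - 1) * S.l := le_mul_of_one_le_left (by linarith [S.hl]) (by linarith [S.hd])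
  unfold period
  linarith

lemma two_mul_s {i : ℤ} (hi : i ∈ Icc 1 S.p) :
    2 * S.s i = (i - 1) * S.period + if Odd i then 2 else S.l := by
  unfold period
  split_ifs with h
  · rw [S.hs_odd i hi.1 hi.2 h]; ring
  · rw [S.hs_even i hi.1 hi.2 (Int.not_odd_iff_even.mp h)]

lemma two_mul_s_sub_of_even_sub {i j : ℤ} (hi : i ∈ Icc 1 S.p) (hj : j ∈ Icc 1 S.p)
    (h : Even (j - i)) : 2 * (S.s j - S.s i) = (j - i) * S.period := by
  have hij : Odd j ↔ Odd i := by
    rw [← Int.not_even_iff_odd, ← Int.not_even_iff_odd, not_iff_not]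
    exact Int.even_sub.mp h
  have hsi := S.two_mul_s hi
  have hsj := S.two_mul_s hj
  simp only [hij] at hsj
  linear_combination hsj - hsi

lemma two_mul_s_sub_of_odd_of_even {i j : ℤ} (hi : i ∈ Icc 1 S.p) (hj : j ∈ Icc 1 S.p)
    (hi' : Odd i) (hj' : Even j) :
    2 * (S.s j - S.s i) = (j - i) * S.period + S.l - 2 := by
  have hsi := S.two_mul_s hi
  have hsj := S.two_mul_s hj
  rw [if_pos hi'] at hsi
  rw [if_neg (Int.not_odd_iff_even.mpr hj')] at hsj
  linear_combination hsj - hsi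

lemma eq_of_even_sub_of_s_le {i j : ℤ} (hi : i ∈ Icc 1 S.p) (hj : j ∈ Icc 1 S.p)
    (h : Even (j - i)) (h0 : S.s i ≤ S.s j) (hle : S.s j ≤ S.s i + S.l - 2) : i = j := by
  have hs := S.two_mul_s_sub_of_even_sub hi hj h
  have hK := S.l_add_two_le_period
  obtain ⟨k, hk⟩ := h
  rcases (by omega : j - i ≤ -2 ∨ j - i = 0 ∨ 2 ≤ j - i) with hji | hji | hji
  · nlinarith
  · omega
  · nlinarith

lemma lt_of_odd_of_even_of_s_le {i j : ℤ} (hi : i ∈ Icc 1 S.p) (hj : j ∈ Icc 1 S.p)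
    (hi' : Odd i) (hj' : Even j) (h : S.s i ≤ S.s j) : i < j := by
  have hs := S.two_mul_s_sub_of_odd_of_even hi hj hi' hj'
  have hK := S.l_add_two_le_period
  by_contra! hji
  have hji : j - i ≤ -1 := by
    obtain ⟨a, rfl⟩ := hi'
    obtain ⟨b, rfl⟩ := hj'
    omega
  nlinarith [mul_le_mul_of_nonneg_right hji (by linarith [S.hl] : (0 : ℤ) ≤ S.period)]

lemma s_add_l_le_of_odd_of_even {i j : ℤ} (hi : i ∈ Icc 1 S.p) (hj : j ∈ Icc 1 S.p)
    (hi' : Odd i) (hj' : Even j) (h : S.s i ≤ S.s j) : S.s i + S.l ≤ S.s j := by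
  have hs := S.two_mul_s_sub_of_odd_of_even hi hj hi' hj'
  have hK := S.l_add_two_le_period
  have hji : 1 ≤ j - i := by linarith [S.lt_of_odd_of_even_of_s_le hi hj hi' hj' h]
  nlinarith

lemma d_eq_two_and_three_lt_l (h : S.d * S.l ≤ 4 * S.l - 8) : S.d = 2 ∧ 3 < S.l := by
  have hl := S.hl
  have hd3 : S.d ≤ 3 := by
    by_contra! hd
    nlinarith
  have hd : S.d ≠ 3 := by
    intro hd3
    rcases S.hcase with hl2 | ⟨-, hd, -⟩
    · rw [hd3, hl2] at h
      omega
    · rw [hd3] at hd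
      exact absurd hd (by decide)
  have hd2 : S.d = 2 := by have := S.hd; omega
  exact ⟨hd2, by rw [hd2] at h; omega⟩

lemma two_mul_s_add_one_sub {i : ℤ} (hi : i ∈ Icc 1 S.p) (hi1 : i + 1 ∈ Icc 1 S.p)
    (hi' : Odd i) : 2 * (S.s (i + 1) - S.s i) = S.d * S.l := by
  rw [S.two_mul_s_sub_of_odd_of_even hi hi1 hi' hi'.add_one, period]
  ring

lemma d_eq_two_and_eq_add_one_of_odd_of_even {i j : ℤ} (hi : i ∈ Icc 1 S.p)
    (hj : j ∈ Icc 1 S.p) (hi' : Odd i) (hj' : Even j) (h0 : S.s i ≤ S.s j)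
    (hle : S.s j ≤ S.s i + 2 * S.l - 4) : S.d = 2 ∧ 3 < S.l ∧ j = i + 1 := by
  have hs := S.two_mul_s_sub_of_odd_of_even hi hj hi' hj'
  have hK := S.l_add_two_le_period
  have hji : 1 ≤ j - i := by linarith [S.lt_of_odd_of_even_of_s_le hi hj hi' hj' h0]
  have hj1 : j = i + 1 := by
    by_contra hne
    have : 3 ≤ j - i := by
      obtain ⟨a, rfl⟩ := hi'
      obtain ⟨b, rfl⟩ := hj'
      omega
    nlinarith
  subst hj1
  have hs₁ := S.two_mul_s_add_one_sub hi hj hi'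
  obtain ⟨hd, hl⟩ := S.d_eq_two_and_three_lt_l (by linarith)
  exact ⟨hd, hl, rfl⟩

end NakSetup

lemma Ilo_of_odd (S : NakSetup) {i : ℤ} (h : Odd i) (x : ℤ) : Ilo S i x = S.s i := if_pos h

lemma Ihi_of_odd (S : NakSetup) {i : ℤ} (h : Odd i) (x : ℤ) : Ihi S i x = S.s i + x - 1 :=
  if_pos h

lemma Ilo_of_even (S : NakSetup) {i : ℤ} (h : Even i) (x : ℤ) : Ilo S i x = S.s i - x + 1 :=
  if_neg (Int.not_odd_iff_even.mpr h)

lemma Ihi_of_even (S : NakSetup) {i : ℤ} (h : Even i) (x : ℤ) : Ihi S i x = S.s i :=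
  if_neg (Int.not_odd_iff_even.mpr h)

/-- for `1 ≤ i, j ≤ p` with `i ≠ j`, there exist `x, y ∈ [1, l-1]` with
(writing `[a,b] = I_i(x)` and `[c,e] = I_j(y)`) `c ≤ b`, `b ≤ e` and `a ≤ c` if and
only if `d = 2`, `l > 3`, `i` is odd, and `j = i + 1`.
(Equivalently: `Hom_Λ(D_i, D_j) ≠ 0` iff `d = 2`, `l > 3`, `i` odd, `j = i + 1`.) -/
theorem stmt0 (S : NakSetup) (i j : ℤ) (hi1 : 1 ≤ i) (hip : i ≤ S.p)
    (hj1 : 1 ≤ j) (hjp : j ≤ S.p) (hij : i ≠ j) :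
    (∃ x, 1 ≤ x ∧ x ≤ S.l - 1 ∧ ∃ y, 1 ≤ y ∧ y ≤ S.l - 1 ∧
        Ilo S j y ≤ Ihi S i x ∧ Ihi S i x ≤ Ihi S j y ∧ Ilo S i x ≤ Ilo S j y) ↔
      (S.d = 2 ∧ 3 < S.l ∧ Odd i ∧ j = i + 1) := by
  have hi : i ∈ Icc 1 S.p := ⟨hi1, hip⟩
  have hj : j ∈ Icc 1 S.p := ⟨hj1, hjp⟩
  constructor
  · rintro ⟨x, hx1, hx2, y, hy1, hy2, hcb, hbe, hac⟩
    rcases Int.even_or_odd i with hi' | hi' <;> rcases Int.even_or_odd j with hj' | hj'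
    · simp only [Ilo_of_even S hj', Ihi_of_even S hi', Ihi_of_even S hj'] at hcb hbe
      exact absurd (S.eq_of_even_sub_of_s_le hi hj (hj'.sub hi') hbe (by linarith)) hij
    · simp only [Ilo_of_odd S hj', Ihi_of_even S hi', Ihi_of_odd S hj'] at hcb hbe
      linarith [S.s_add_l_le_of_odd_of_even hj hi hj' hi' hcb]
    · simp only [Ilo_of_even S hj', Ihi_of_odd S hi', Ihi_of_even S hj'] at hcb hbe
      obtain ⟨hd, hl, hji⟩ := S.d_eq_two_and_eq_add_one_of_odd_of_even hi hj hi' hj'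
        (by linarith) (by linarith)
      exact ⟨hd, hl, hi', hji⟩
    · simp only [Ilo_of_odd S hi', Ilo_of_odd S hj', Ihi_of_odd S hi'] at hcb hac
      exact absurd (S.eq_of_even_sub_of_s_le hi hj (hj'.sub_odd hi') hac (by linarith)) hij
  · rintro ⟨hd, hl, hi', rfl⟩
    have hs := S.two_mul_s_add_one_sub hi hj hi'
    rw [hd] at hs
    refine ⟨S.l - 1, by omega, le_rfl, S.l - 1, by omega, le_rfl, ?_, ?_, ?_⟩ <;>
      simp only [Ilo_of_odd S hi', Ihi_of_odd S hi', Ilo_of_even S hi'.add_one,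
        Ihi_of_even S hi'.add_one] <;> linarith
end

section
/- Let n ≥ 1 and l ≥ 2 be integers and let B, R ⊆ [1, n] be disjoint subsets. Then the following are equivalent: (1) for every x ∈ B and y ∈ R it is not the case that x ≤ y ≤ x + l − 1; (2) for every x ∈ B and y ∈ R with x < y there exists an integer z with x < z, z + l − 2 < y, and [z, z + l − 2] ∩ (R ∪ B) = ∅. (This is the combinatorial form of the paper's lemma: Hom_Λ(P(B), P(R)) = 0 if and only if condition (2) holds.) -/
/-!
If no `x ∈ B` sees a `y ∈ R` within distance `l - 1`, take for `x < y` the largest `m ∈ B`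
below `y`: then `y ≥ m + l`, and the window `[m + 1, m + l - 1]` meets neither `R`
(it is within reach of `m`) nor `B` (by maximality of `m`). Conversely a window
`[z, z + l - 2]` strictly between `x` and `y` forces `y - x ≥ l`, and `x ≠ y` because
`B` and `R` are disjoint.
-/

theorem Finset.exists_max_mem_lt {α : Type*} [LinearOrder α] {s : Finset α} {x y : α}
    (hx : x ∈ s) (hxy : x < y) :
    ∃ m ∈ s, x ≤ m ∧ m < y ∧ ∀ a ∈ s, a < y → a ≤ m := by
  have hne : (s.filter (· < y)).Nonempty := ⟨x, Finset.mem_filter.mpr ⟨hx, hxy⟩⟩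
  obtain ⟨hmem, hlt⟩ := Finset.mem_filter.mp ((s.filter (· < y)).max'_mem hne)
  exact ⟨_, hmem, Finset.le_max' _ x (Finset.mem_filter.mpr ⟨hx, hxy⟩), hlt,
    fun a ha hay => Finset.le_max' _ a (Finset.mem_filter.mpr ⟨ha, hay⟩)⟩

theorem exists_empty_window_of_forall_not_reach {l : ℤ} {B R : Finset ℤ}
    (hreach : ∀ x ∈ B, ∀ y ∈ R, ¬(x ≤ y ∧ y ≤ x + l - 1))
    {x y : ℤ} (hx : x ∈ B) (hy : y ∈ R) (hxy : x < y) :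
    ∃ z, x < z ∧ z + l - 2 < y ∧ Finset.Icc z (z + l - 2) ∩ (R ∪ B) = ∅ := by
  obtain ⟨m, hmB, hxm, hmy, hmax⟩ := Finset.exists_max_mem_lt hx hxy
  have hmly : m + l ≤ y := by
    have := hreach m hmB y hy
    omega
  refine ⟨m + 1, by omega, by omega, Finset.eq_empty_of_forall_notMem ?_⟩
  simp only [Finset.mem_inter, Finset.mem_union, Finset.mem_Icc]
  rintro a ⟨⟨ha₁, ha₂⟩, haR | haB⟩
  · exact hreach m hmB a haR ⟨by omega, by omega⟩
  · have := hmax a haB (by omega)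
    omega

theorem stmt1_general (l : ℤ)
    (B R : Finset ℤ)
    (hBR : Disjoint B R) :
    (∀ x ∈ B, ∀ y ∈ R, ¬(x ≤ y ∧ y ≤ x + l - 1)) ↔
      (∀ x ∈ B, ∀ y ∈ R, x < y →
        ∃ z, x < z ∧ z + l - 2 < y ∧ Finset.Icc z (z + l - 2) ∩ (R ∪ B) = ∅) := by
  refine ⟨fun hreach x hx y hy hxy => exists_empty_window_of_forall_not_reach hreach hx hy hxy,
    fun hwindow x hx y hy ⟨hxy, hyx⟩ => ?_⟩
  have hne : x ≠ y := fun h => Finset.disjoint_left.mp hBR hx (h ▸ hy)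
  obtain ⟨z, hxz, hzy, -⟩ := hwindow x hx y hy (lt_of_le_of_ne hxy hne)
  omega

/-- for integers `n ≥ 1`, `l ≥ 2` and disjoint `B, R ⊆ [1, n]`, the
following are equivalent: (1) for every `x ∈ B` and `y ∈ R` it is not the case that
`x ≤ y ≤ x + l - 1` (i.e. `Hom_Λ(P(B), P(R)) = 0`); (2) for every `x ∈ B` and `y ∈ R`
with `x < y` there is `z` with `x < z`, `z + l - 2 < y` and
`[z, z + l - 2] ∩ (R ∪ B) = ∅`. -/
theorem stmt1 (n l : ℤ) (hn : 1 ≤ n) (hl : 2 ≤ l)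
    (B R : Finset ℤ) (hB : B ⊆ Finset.Icc 1 n) (hR : R ⊆ Finset.Icc 1 n)
    (hBR : Disjoint B R) :
    (∀ x ∈ B, ∀ y ∈ R, ¬(x ≤ y ∧ y ≤ x + l - 1)) ↔
      (∀ x ∈ B, ∀ y ∈ R, x < y →
        ∃ z, x < z ∧ z + l - 2 < y ∧ Finset.Icc z (z + l - 2) ∩ (R ∪ B) = ∅) :=
  stmt1_general l B R hBR
end

section
/- Let (X_i, R, B) be a rigid C-datum and let i ∈ [2, p] be odd with X_i ≠ ∅. Then 𝖱_{i+1} ⊊ 𝖡_i and 𝖡_{i−1} ⊊ 𝖱_i (the inclusions are strict). -/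
open scoped Classical

/-- A `C`-datum: subsets `X i ⊆ [1, l-1]` for `2 ≤ i ≤ p` (empty outside this range)
together with disjoint subsets `R, B ⊆ [1, n]`. -/
structure CDatum (S : NakSetup) where
  X : ℤ → Finset ℤ
  R : Finset ℤ
  B : Finset ℤ
  hX : ∀ i, X i ⊆ Finset.Icc 1 (S.l - 1)
  hXout : ∀ i, ¬(2 ≤ i ∧ i ≤ S.p) → X i = ∅
  hR : R ⊆ Finset.Icc 1 S.n
  hB : B ⊆ Finset.Icc 1 S.n
  hRB : Disjoint R B

namespace CDatum

variable {S : NakSetup}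

/-- `m i = |X i|` (as an integer). -/
noncomputable def m (D : CDatum S) (i : ℤ) : ℤ := (D.X i).card

/-- `l_i`: the minimum of `X i`, or `l` if `X i = ∅`. -/
noncomputable def lo (D : CDatum S) (i : ℤ) : ℤ :=
  if h : (D.X i).Nonempty then (D.X i).min' h else S.l

/-- `n_i`: the maximum of `X i`, or `0` if `X i = ∅`. -/
noncomputable def hi (D : CDatum S) (i : ℤ) : ℤ :=
  if h : (D.X i).Nonempty then (D.X i).max' h else 0

/-- The interval `𝖡_i`. -/
noncomputable def BI (D : CDatum S) (i : ℤ) : Finset ℤ :=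
  if Odd i then Finset.Icc (S.s i) (S.s i + D.hi i - 1)
  else Finset.Icc (S.s i - D.hi i + 1) (S.s i)

/-- The interval `𝖱_i`. -/
noncomputable def RI (D : CDatum S) (i : ℤ) : Finset ℤ :=
  if Odd i then Finset.Icc (S.s (i - 1) - (S.l - D.lo i) + 1) (S.s (i - 1))
  else Finset.Icc (S.s (i - 1)) (S.s (i - 1) + (S.l - D.lo i) - 1)

/-- A `C`-datum is rigid (the combinatorial form of being a `τ_d`-rigid pair). -/
def Rigid (D : CDatum S) : Prop :=
  (∀ x ∈ D.B, ∀ y ∈ D.R, x < y →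
      ∃ z, x < z ∧ z + S.l - 2 < y ∧ Finset.Icc z (z + S.l - 2) ∩ (D.R ∪ D.B) = ∅) ∧
  (∀ i, 2 ≤ i → i ≤ S.p → Odd i →
      D.hi (i - 1) + D.hi i ≤ S.l - 1 ∧ S.l + 1 ≤ D.lo i + D.lo (i + 1) ∧
      (S.d = 2 → D.hi i ≤ D.lo (i + 2) + 1 ∧ D.hi (i - 2) ≤ D.lo i + 1)) ∧
  (∀ i, 2 ≤ i → i ≤ S.p → Even i →
      D.hi i + D.hi (i + 1) ≤ S.l - 1 ∧ S.l + 1 ≤ D.lo (i - 1) + D.lo i) ∧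
  (∀ i, 2 ≤ i → i ≤ S.p → D.R ∩ D.RI i = ∅ ∧ D.B ∩ D.BI i = ∅)

/-- The left endpoint of `Ξ(i, i+k)` (the left endpoint of `𝖱_i`). -/
noncomputable def xiLo (D : CDatum S) (i : ℤ) : ℤ :=
  if Odd i then S.s (i - 1) - (S.l - D.lo i) + 1 else S.s (i - 1)

/-- The right endpoint of `Ξ(i, i+k)`, depending on `j = i + k`
(the right endpoint of `𝖡_{i+k}`). -/
noncomputable def xiHi (D : CDatum S) (j : ℤ) : ℤ :=
  if Even j then S.s j else S.s j + D.hi j - 1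

/-- The interval `Ξ(i, i+k)`. -/
noncomputable def Xi (D : CDatum S) (i k : ℤ) : Finset ℤ :=
  Finset.Icc (D.xiLo i) (D.xiHi (i + k))

/-- The union `𝖡_2 ∪ … ∪ 𝖡_p`. -/
noncomputable def BigB (D : CDatum S) : Finset ℤ :=
  (Finset.Icc 2 S.p).biUnion fun i => D.BI i

/-- The union `𝖱_2 ∪ … ∪ 𝖱_p`. -/
noncomputable def BigR (D : CDatum S) : Finset ℤ :=
  (Finset.Icc 2 S.p).biUnion fun i => D.RI i

/-- The interval `I` is support. -/
def IsSupport (D : CDatum S) (I : Finset ℤ) : Prop :=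
  D.R ∩ I = ∅ ∧ D.B ∩ I = I \ D.BigB

/-- The interval `I` is rigid. -/
def IsRigidI (D : CDatum S) (I : Finset ℤ) : Prop :=
  D.B ∩ I = ∅ ∧ D.R ∩ I = I \ D.BigR

/-- The interval `I` is support to rigid at `x ∈ I`. -/
def IsSuppToRigid (D : CDatum S) (I : Finset ℤ) (x : ℤ) : Prop :=
  x ∈ I ∧ D.B ∩ I = {y ∈ I | y ≤ x} ∧ (D.B ∩ I).Nonempty ∧
    D.R ∩ I = {y ∈ I | x + S.l ≤ y} ∧ (D.R ∩ I).Nonempty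

/-- The interval `I` is rigid to support at `x ∈ I`. -/
def IsRigidToSupp (D : CDatum S) (I : Finset ℤ) (x : ℤ) : Prop :=
  x ∈ I ∧ D.R ∩ I = {y ∈ I | y ≤ x} ∧ (D.R ∩ I).Nonempty ∧
    D.B ∩ I = {y ∈ I | x + 1 ≤ y} ∧ (D.B ∩ I).Nonempty

/-- `(X_i, …, X_{i+k})` is an admissible configuration (types (I)–(VIII)). -/
def Admissible (D : CDatum S) (i k : ℤ) : Prop :=
  2 ≤ i ∧ i + k ≤ S.p ∧ 0 ≤ k ∧
  (∀ j, 0 ≤ j → j ≤ k → (D.X (i + j)).Nonempty) ∧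
  ((k = 0 ∧ D.lo i = 1 ∧ D.hi i < S.l - 1 ∧ D.IsSupport (D.Xi i k)) ∨
   (k = 0 ∧ 1 < D.lo i ∧ D.hi i = S.l - 1 ∧ D.IsRigidI (D.Xi i k)) ∨
   (k = 0 ∧ D.lo i = 1 ∧ D.hi i = S.l - 1 ∧
     (D.IsSupport (D.Xi i k) ∨ D.IsRigidI (D.Xi i k) ∨
       ∃ x ∈ D.Xi i k \ D.BI i, D.IsSuppToRigid (D.Xi i k) x)) ∨
   (k = 1 ∧ Odd i ∧ D.hi i = S.l - 1 ∧ D.hi (i + 1) = S.l - 1 ∧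
     D.m i + D.m (i + 1) < S.l - 1 ∧ D.IsRigidI (D.Xi i k)) ∨
   (k = 1 ∧ Even i ∧ D.lo i = 1 ∧ D.lo (i + 1) = 1 ∧
     D.m i + D.m (i + 1) < S.l - 1 ∧ D.IsSupport (D.Xi i k)) ∨
   (k = 1 ∧ Odd i ∧ D.hi i = S.l - 1 ∧ D.hi (i + 1) = S.l - 1 ∧
     D.m i + D.m (i + 1) = S.l - 1 ∧
     (D.IsRigidI (D.Xi i k) ∨
       ∃ x ∈ Finset.Icc (S.s i - (S.l - D.m (i + 1))) (S.s i - 1),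
         D.IsSuppToRigid (D.Xi i k) x)) ∨
   (k = 1 ∧ Even i ∧ D.lo i = 1 ∧ D.lo (i + 1) = 1 ∧
     D.m i + D.m (i + 1) = S.l - 1 ∧
     (D.IsSupport (D.Xi i k) ∨
       ∃ x ∈ Finset.Icc (S.s i - (S.l - 1)) (S.s i - D.m i),
         D.IsSuppToRigid (D.Xi i k) x)) ∨
   (k = 2 ∧ S.d = 2 ∧ Even i ∧ D.lo i = 1 ∧ D.lo (i + 1) = S.l - D.lo (i + 2) + 1 ∧
     D.hi (i + 1) = S.l - D.hi i - 1 ∧ D.hi (i + 2) = S.l - 1 ∧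
     ∃ x ∈ Finset.Icc (S.s (i + 1) - D.lo (i + 2)) (S.s i - D.hi i),
       D.IsSuppToRigid (D.Xi i k) x))

/-- The configuration on `[i, i+k]` is full: `m_{i+j} = n_{i+j} - l_{i+j} + 1`. -/
def Full (D : CDatum S) (i k : ℤ) : Prop :=
  ∀ j, 0 ≤ j → j ≤ k → D.m (i + j) = D.hi (i + j) - D.lo (i + j) + 1

/-- `[a, b]` is a maximal run of indices with `X` nonempty
(an interval of the diagonal partition). -/
def IsBlock (D : CDatum S) (a b : ℤ) : Prop :=
  2 ≤ a ∧ b ≤ S.p ∧ a ≤ b ∧ (∀ j, a ≤ j → j ≤ b → (D.X j).Nonempty) ∧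
    D.X (a - 1) = ∅ ∧ D.X (b + 1) = ∅

/-- `[a, b]` is the first interval of the diagonal partition. -/
def FirstBlock (D : CDatum S) (a b : ℤ) : Prop :=
  D.IsBlock a b ∧ ∀ j, j < a → D.X j = ∅

/-- `[a, b]` is the last interval of the diagonal partition. -/
def LastBlock (D : CDatum S) (a b : ℤ) : Prop :=
  D.IsBlock a b ∧ ∀ j, b < j → D.X j = ∅

/-- `[a, b]` and `[a', b']` are consecutive intervals of the diagonal partition. -/
def ConsecBlocks (D : CDatum S) (a b a' b' : ℤ) : Prop :=
  D.IsBlock a b ∧ D.IsBlock a' b' ∧ b < a' ∧ ∀ j, b < j → j < a' → D.X j = ∅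

/-- The diagonal component `T = {i ∈ [2, p] : X i ≠ ∅}`. -/
noncomputable def T (D : CDatum S) : Finset ℤ :=
  {i ∈ Finset.Icc 2 S.p | (D.X i).Nonempty}

/-- The configuration on the block `[a, b]` is full admissible of type (III). -/
def FullType3 (D : CDatum S) (a b : ℤ) : Prop :=
  a = b ∧ D.lo a = 1 ∧ D.hi a = S.l - 1 ∧ D.m a = S.l - 1 ∧
    (D.IsSupport (D.Xi a 0) ∨ D.IsRigidI (D.Xi a 0) ∨
      ∃ x ∈ D.Xi a 0 \ D.BI a, D.IsSuppToRigid (D.Xi a 0) x)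

/-- A `Θ`-interval is rigid, support, or rigid to support. -/
def GoodTheta (D : CDatum S) (I : Finset ℤ) : Prop :=
  D.IsRigidI I ∨ D.IsSupport I ∨ ∃ x, D.IsRigidToSupp I x

/-- A `C`-datum is well-configured. -/
def WellConfigured (D : CDatum S) : Prop :=
  (D.T = ∅ ∧ ∃ x, 0 ≤ x ∧ x ≤ S.n ∧ D.R = Finset.Icc 1 x ∧ D.B = Finset.Icc (x + 1) S.n) ∨
  (D.T.Nonempty ∧
    (∀ a b, D.IsBlock a b → D.Admissible a (b - a) ∧ D.Full a (b - a)) ∧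
    (∀ a b a' b', D.ConsecBlocks a b a' b' →
      D.Xi a (b - a) ∩ D.Xi a' (b' - a') = ∅) ∧
    (∀ a b, D.FirstBlock a b → D.GoodTheta (Finset.Icc 1 (D.xiLo a - 1))) ∧
    (∀ a b a' b', D.ConsecBlocks a b a' b' →
      D.GoodTheta (Finset.Icc (D.xiHi b + 1) (D.xiLo a' - 1))) ∧
    (∀ a b, D.LastBlock a b → D.GoodTheta (Finset.Icc (D.xiHi b + 1) S.n)) ∧
    (∀ a b, D.FirstBlock a b → D.IsRigidI (D.Xi a (b - a)) →
      D.IsRigidI (Finset.Icc 1 (D.xiLo a - 1)) ∨ D.FullType3 a b) ∧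
    (∀ a b a' b', D.ConsecBlocks a b a' b' → D.IsRigidI (D.Xi a' (b' - a')) →
      D.IsRigidI (Finset.Icc (D.xiHi b + 1) (D.xiLo a' - 1)) ∨ D.FullType3 a' b') ∧
    (∀ a b a' b', D.ConsecBlocks a b a' b' → D.IsSupport (D.Xi a (b - a)) →
      D.IsSupport (Finset.Icc (D.xiHi b + 1) (D.xiLo a' - 1)) ∨ D.FullType3 a b) ∧
    (∀ a b, D.LastBlock a b → D.IsSupport (D.Xi a (b - a)) →
      D.IsSupport (Finset.Icc (D.xiHi b + 1) S.n) ∨ D.FullType3 a b))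

/-- The summand count `|R| + |B| + Σ_{i=2}^p m_i`. -/
noncomputable def count (D : CDatum S) : ℤ :=
  (D.R.card : ℤ) + (D.B.card : ℤ) + ∑ i ∈ Finset.Icc 2 S.p, D.m i

end CDatum

/-- for a rigid `C`-datum and odd `i ∈ [2, p]` with `X i ≠ ∅`,
one has strict inclusions `𝖱_{i+1} ⊊ 𝖡_i` and `𝖡_{i-1} ⊊ 𝖱_i`. -/
theorem stmt2 {S : NakSetup} (D : CDatum S) (hrig : D.Rigid) (i : ℤ)
    (h2i : 2 ≤ i) (hip : i ≤ S.p) (hodd : Odd i) (hne : (D.X i).Nonempty) :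
    D.RI (i + 1) ⊂ D.BI i ∧ D.BI (i - 1) ⊂ D.RI i := by
  have hXsub := D.hX i
  have hlo1 : 1 ≤ D.lo i := by
    unfold CDatum.lo; rw [dif_pos hne]
    exact (Finset.mem_Icc.mp (hXsub (Finset.min'_mem _ hne))).1
  have hhile : D.hi i ≤ S.l - 1 := by
    unfold CDatum.hi; rw [dif_pos hne]
    exact (Finset.mem_Icc.mp (hXsub (Finset.max'_mem _ hne))).2
  have hlohi : D.lo i ≤ D.hi i := by
    unfold CDatum.lo CDatum.hi; rw [dif_pos hne, dif_pos hne]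
    exact Finset.min'_le _ _ (Finset.max'_mem _ hne)
  have he1 : ¬ Odd (i + 1) := by rw [Int.odd_iff] at hodd ⊢; omega
  have he2 : ¬ Odd (i - 1) := by rw [Int.odd_iff] at hodd ⊢; omega
  obtain ⟨h1, h2, -⟩ := hrig.2.1 i h2i hip hodd
  simp only [CDatum.BI, CDatum.RI, if_pos hodd, if_neg he1, if_neg he2,
    add_sub_cancel_right]
  constructor
  · rw [Finset.ssubset_iff_of_subset (Finset.Icc_subset_Icc le_rfl (by omega))]
    exact ⟨S.s i + D.hi i - 1, Finset.mem_Icc.mpr ⟨by omega, le_rfl⟩,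
      fun h => by have := Finset.mem_Icc.mp h; omega⟩
  · rw [Finset.ssubset_iff_of_subset (Finset.Icc_subset_Icc (by omega) le_rfl)]
    exact ⟨S.s (i - 1) - (S.l - D.lo i) + 1, Finset.mem_Icc.mpr ⟨le_rfl, by omega⟩,
      fun h => by have := Finset.mem_Icc.mp h; omega⟩
end

section
/- Let (X_i, R, B) be a rigid C-datum and let 2 ≤ i ≤ i + k ≤ p with X_{i+j} ≠ ∅ for all 0 ≤ j ≤ k. Then m_i + m_{i+1} + … + m_{i+k} ≤ l − 1. -/
open scoped Classical

/-!
Along a run of nonempty diagonals the rigidity inequalities alternate: at an even index `j`,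
`n_j + n_{j+1} ≤ l - 1`, and at an odd index `j`, `l + 1 ≤ l_j + l_{j+1}`. Together with
`m_j ≤ n_j - l_j + 1` they propagate the bound `m_i + ⋯ + m_j ≤ n_j` (for `j` even),
resp. `≤ l - l_j` (for `j` odd), along the run, and both bounds are at most `l - 1`.
-/

namespace CDatum

variable {S : NakSetup} (D : CDatum S) {j : ℤ}

lemma one_le_lo (h : (D.X j).Nonempty) : 1 ≤ D.lo j := by
  rw [lo, dif_pos h]
  exact (Finset.mem_Icc.mp (D.hX j (Finset.min'_mem _ h))).1

lemma hi_le_l_sub_one (h : (D.X j).Nonempty) : D.hi j ≤ S.l - 1 := by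
  rw [hi, dif_pos h]
  exact (Finset.mem_Icc.mp (D.hX j (Finset.max'_mem _ h))).2

lemma X_subset_Icc_lo_hi (h : (D.X j).Nonempty) : D.X j ⊆ Finset.Icc (D.lo j) (D.hi j) := by
  intro x hx
  rw [lo, hi, dif_pos h, dif_pos h]
  exact Finset.mem_Icc.mpr ⟨Finset.min'_le _ _ hx, Finset.le_max' _ _ hx⟩

lemma m_le_hi_sub_lo_add_one (h : (D.X j).Nonempty) : D.m j ≤ D.hi j - D.lo j + 1 := by
  have hcard : (D.X j).card ≤ (Finset.Icc (D.lo j) (D.hi j)).card :=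
    Finset.card_le_card (D.X_subset_Icc_lo_hi h)
  have hlo_le_hi : D.lo j ≤ D.hi j := by
    rw [lo, hi, dif_pos h, dif_pos h]
    exact Finset.min'_le _ _ (Finset.max'_mem _ h)
  rw [Int.card_Icc] at hcard
  rw [m]
  omega

noncomputable def runBound (j : ℤ) : ℤ :=
  if Even j then D.hi j else S.l - D.lo j

lemma runBound_le (h : (D.X j).Nonempty) : D.runBound j ≤ S.l - 1 := by
  have := D.one_le_lo h
  have := D.hi_le_l_sub_one h
  unfold runBound
  split_ifs <;> omega

lemma m_le_runBound (h : (D.X j).Nonempty) : D.m j ≤ D.runBound j := by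
  have := D.one_le_lo h
  have := D.hi_le_l_sub_one h
  have := D.m_le_hi_sub_lo_add_one h
  unfold runBound
  split_ifs <;> omega

lemma runBound_add_m_succ_le (hrig : D.Rigid) (h2j : 2 ≤ j) (hjp : j ≤ S.p)
    (hsucc : (D.X (j + 1)).Nonempty) : D.runBound j + D.m (j + 1) ≤ D.runBound (j + 1) := by
  have := D.one_le_lo hsucc
  have := D.m_le_hi_sub_lo_add_one hsucc
  by_cases hev : Even j
  · have := (hrig.2.2.1 j h2j hjp hev).1
    simp only [runBound, Int.even_add_one, hev, not_true_eq_false, if_true, if_false]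
    omega
  · have := (hrig.2.1 j h2j hjp (Int.not_even_iff_odd.mp hev)).2.1
    simp only [runBound, Int.even_add_one, hev, not_false_eq_true, if_true, if_false]
    omega

theorem sum_m_le_runBound (hrig : D.Rigid) {i k : ℤ} (h2i : 2 ≤ i) (hk : 0 ≤ k)
    (hikp : i + k ≤ S.p) (hne : ∀ j, 0 ≤ j → j ≤ k → (D.X (i + j)).Nonempty) :
    ∑ j ∈ Finset.Icc (0 : ℤ) k, D.m (i + j) ≤ D.runBound (i + k) := by
  induction k, hk using Int.leInduction with
  | base =>
    simpa using D.m_le_runBound (by simpa using hne 0 le_rfl le_rfl)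
  | succ k hk ih =>
    have hsum := ih (by omega) fun j hj hjk => hne j hj (by omega)
    have hstep := D.runBound_add_m_succ_le hrig (j := i + k) (by omega) (by omega)
      (by simpa only [add_assoc] using hne (k + 1) (by omega) le_rfl)
    rw [← Finset.insert_Icc_right_eq_Icc_add_one (by omega),
      Finset.sum_insert (by simp)]
    rw [add_assoc] at hstep
    linarith

end CDatum

/-- for a rigid `C`-datum with `X_{i+j} ≠ ∅` for `0 ≤ j ≤ k`,
the number of summands in these consecutive diagonals is at most `l - 1`. -/
theorem stmt3 {S : NakSetup} (D : CDatum S) (hrig : D.Rigid) (i k : ℤ)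
    (h2i : 2 ≤ i) (hk : 0 ≤ k) (hikp : i + k ≤ S.p)
    (hne : ∀ j, 0 ≤ j → j ≤ k → (D.X (i + j)).Nonempty) :
    ∑ j ∈ Finset.Icc (0 : ℤ) k, D.m (i + j) ≤ S.l - 1 :=
  (D.sum_m_le_runBound hrig h2i hk hikp hne).trans (D.runBound_le (hne k hk le_rfl))
end

section
/- Let (X_i, R, B) be a rigid C-datum with d = 2, and let 2 ≤ i ≤ i + k ≤ p with X_{i+j} ≠ ∅ for all 0 ≤ j ≤ k. If i is odd then k ≤ 1, and if i is even then k ≤ 2. -/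
open scoped Classical

/-!
For odd `i`, the rigidity inequalities on three consecutive nonempty diagonals chain to
`l + 1 ≤ l_i + l_{i+1} ≤ n_i + n_{i+1} ≤ (l_{i+2} + 1) + n_{i+1} ≤ n_{i+1} + n_{i+2} + 1 ≤ l`,
the middle step being the extra condition available only for `d = 2`. Hence a run of nonempty
diagonals has length at most two from an odd start; from an even start `i`, a run of four would
contain such a run of three starting at the odd index `i + 1`.
-/

namespace CDatum

variable {S : NakSetup} (D : CDatum S)

lemma lo_le_hi {i : ℤ} (h : (D.X i).Nonempty) : D.lo i ≤ D.hi i := by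
  simp only [lo, hi, dif_pos h]
  exact Finset.min'_le _ _ (Finset.max'_mem _ h)

lemma mem_Icc_of_nonempty {i : ℤ} (h : (D.X i).Nonempty) : 2 ≤ i ∧ i ≤ S.p := by
  by_contra hi
  exact Finset.not_nonempty_empty (D.hXout i hi ▸ h)

variable {D}

lemma Rigid.not_nonempty_three_of_odd (hrig : D.Rigid) (hd2 : S.d = 2) {i : ℤ} (hodd : Odd i)
    (h₀ : (D.X i).Nonempty) (h₁ : (D.X (i + 1)).Nonempty) (h₂ : (D.X (i + 2)).Nonempty) :
    False := by
  obtain ⟨_, hodd_cond, heven_cond, _⟩ := hrig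
  have hi := D.mem_Icc_of_nonempty h₀
  have hi₂ := D.mem_Icc_of_nonempty h₂
  obtain ⟨-, hlo, hd⟩ := hodd_cond i hi.1 (by omega) hodd
  have hhi := (heven_cond (i + 1) (by omega) (by omega) hodd.add_one).1
  rw [add_assoc, one_add_one_eq_two] at hhi
  linarith [(hd hd2).1, D.lo_le_hi h₀, D.lo_le_hi h₁, D.lo_le_hi h₂]

end CDatum

theorem stmt4_general {S : NakSetup} (D : CDatum S) (hrig : D.Rigid) (hd2 : S.d = 2)
    (i k : ℤ)
    (hne : ∀ j, 0 ≤ j → j ≤ k → (D.X (i + j)).Nonempty) :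
    (Odd i → k ≤ 1) ∧ (Even i → k ≤ 2) := by
  constructor
  · intro hodd
    by_contra! hk
    exact hrig.not_nonempty_three_of_odd hd2 hodd
      (by simpa using hne 0 le_rfl (by omega)) (hne 1 zero_le_one (by omega))
      (hne 2 zero_le_two (by omega))
  · intro heven
    by_contra! hk
    have hshift : ∀ j, 0 ≤ j → j ≤ 2 → (D.X (i + 1 + j)).Nonempty := fun j hj hj₂ => by
      simpa only [add_assoc] using hne (1 + j) (by omega) (by omega)
    exact hrig.not_nonempty_three_of_odd hd2 heven.add_one
      (by simpa using hshift 0 le_rfl zero_le_two) (hshift 1 zero_le_one one_le_two)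
      (hshift 2 zero_le_two le_rfl)

/-- for a rigid `C`-datum with `d = 2` and `X_{i+j} ≠ ∅` for `0 ≤ j ≤ k`:
if `i` is odd then `k ≤ 1`, and if `i` is even then `k ≤ 2`. -/
theorem stmt4 {S : NakSetup} (D : CDatum S) (hrig : D.Rigid) (hd2 : S.d = 2)
    (i k : ℤ) (h2i : 2 ≤ i) (hk : 0 ≤ k) (hikp : i + k ≤ S.p)
    (hne : ∀ j, 0 ≤ j → j ≤ k → (D.X (i + j)).Nonempty) :
    (Odd i → k ≤ 1) ∧ (Even i → k ≤ 2) :=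
  stmt4_general D hrig hd2 i k hne
end

section
/- Let (X_i, R, B) be a rigid C-datum with d > 2, and let 2 ≤ i ≤ i + k ≤ p with k ≥ 2 and X_{i+j} ≠ ∅ for all 0 ≤ j ≤ k. Then |(R ∪ B) ∩ Ξ(i, i+k)| + Σ_{j=0}^k m_{i+j} < |Ξ(i, i+k)|. -/
open scoped Classical

/-- for a rigid `C`-datum with `d > 2`, `k ≥ 2` and `X_{i+j} ≠ ∅`
for `0 ≤ j ≤ k`, one has `|(R ∪ B) ∩ Ξ(i,i+k)| + Σ m_{i+j} < |Ξ(i,i+k)|`. -/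
theorem stmt5 {S : NakSetup} (D : CDatum S) (hrig : D.Rigid) (hd : 2 < S.d)
    (i k : ℤ) (h2i : 2 ≤ i) (hk : 2 ≤ k) (hikp : i + k ≤ S.p)
    (hne : ∀ j, 0 ≤ j → j ≤ k → (D.X (i + j)).Nonempty) :
    ((((D.R ∪ D.B) ∩ D.Xi i k).card : ℤ) + ∑ j ∈ Finset.Icc (0 : ℤ) k, D.m (i + j))
      < ((D.Xi i k).card : ℤ) := by
  classical
  obtain ⟨ha, hb1, hb2, hb3⟩ := hrig
  have hl2 : 2 ≤ S.l := S.hl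
  have hd3 : 3 ≤ S.d := by omega
  -- cardinality of integer intervals
  have hcard : ∀ a b : ℤ, ((Finset.Icc a b).card : ℤ) = max (b + 1 - a) 0 := by
    intro a b; rw [Int.card_Icc]; exact Int.toNat_eq_max _
  have hnotmem : ∀ (A C : Finset ℤ), A ∩ C = ∅ → ∀ x, x ∈ A → x ∉ C := by
    intro A C h x hx hc
    have : x ∈ A ∩ C := Finset.mem_inter.2 ⟨hx, hc⟩
    simp [h] at this
  -- gap lemmas
  have hgapE : ∀ u t : ℤ, u = t - 1 → 2 ≤ t → t ≤ S.p → ¬Odd t →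
      2 * S.l - 1 ≤ S.s t - S.s u := by
    intro u t hu h1 h2 het
    subst hu
    have het' : Even t := Int.not_odd_iff_even.1 het
    have hot : Odd (t - 1) := by
      rcases het' with ⟨r, hr⟩; exact ⟨r - 1, by omega⟩
    have e1 := S.hs_even t (by omega) h2 het'
    have e2 := S.hs_odd (t - 1) (by omega) (by omega) hot
    have key : 2 * (S.s t - S.s (t - 1)) = S.d * S.l := by linear_combination e1 - e2
    rcases S.hcase with hc | hc
    · rw [hc] at key ⊢; omega
    · obtain ⟨hl3, hde, _⟩ := hc
      have hd4 : 4 ≤ S.d := by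
        rcases hde with ⟨r, hr⟩; omega
      nlinarith [key]
  have hgapO : ∀ u t : ℤ, u = t - 1 → 2 ≤ t → t ≤ S.p → Odd t →
      S.l + 1 ≤ S.s t - S.s u := by
    intro u t hu h1 h2 hot
    subst hu
    have het : Even (t - 1) := by
      rcases hot with ⟨r, hr⟩; exact ⟨r, by omega⟩
    have e1 := S.hs_odd t (by omega) h2 hot
    have e2 := S.hs_even (t - 1) (by omega) (by omega) het
    have key : 2 * (S.s t - S.s (t - 1)) = (S.d - 2) * S.l + 4 := by
      linear_combination e1 - e2
    rcases S.hcase with hc | hc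
    · rw [hc] at key ⊢; omega
    · obtain ⟨hl3, hde, _⟩ := hc
      have hd4 : 4 ≤ S.d := by rcases hde with ⟨r, hr⟩; omega
      nlinarith [key]
  have hgap : ∀ u t : ℤ, u = t - 1 → 2 ≤ t → t ≤ S.p → S.l + 1 ≤ S.s t - S.s u := by
    intro u t hu h1 h2
    rcases Int.even_or_odd t with he | ho
    · have := hgapE u t hu h1 h2 (by rwa [Int.not_odd_iff_even]); omega
    · exact hgapO u t hu h1 h2 ho
  have hmono : ∀ a b : ℤ, 1 ≤ a → a ≤ b → b ≤ S.p → S.s a ≤ S.s b := by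
    intro a b ha1 hab
    refine Int.le_induction (motive := fun b _ => b ≤ S.p → S.s a ≤ S.s b) ?_ ?_ b hab
    · intro _; exact le_refl _
    · intro n hn ih hnp
      have h1 := ih (by omega)
      have h2 := hgap n (n + 1) (by ring) (by omega) (by omega)
      omega
  -- facts about X on the range
  have hne' : ∀ t, i ≤ t → t ≤ i + k → (D.X t).Nonempty := by
    intro t h1 h2
    have := hne (t - i) (by omega) (by omega)
    rwa [show i + (t - i) = t by ring] at this
  have hXf : ∀ t, i ≤ t → t ≤ i + k →
      1 ≤ D.lo t ∧ D.lo t ≤ D.hi t ∧ D.hi t ≤ S.l - 1 ∧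
        D.m t ≤ D.hi t - D.lo t + 1 ∧ 1 ≤ D.m t := by
    intro t h1 h2
    have hnet := hne' t h1 h2
    have hlo : D.lo t = (D.X t).min' hnet := by rw [CDatum.lo, dif_pos hnet]
    have hhi : D.hi t = (D.X t).max' hnet := by rw [CDatum.hi, dif_pos hnet]
    have hmem1 := (D.X t).min'_mem hnet
    have hmem2 := (D.X t).max'_mem hnet
    have hb1' := D.hX t hmem1
    have hb2' := D.hX t hmem2
    rw [Finset.mem_Icc] at hb1' hb2'
    have hsub : D.X t ⊆ Finset.Icc (D.lo t) (D.hi t) := by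
      intro x hx
      rw [Finset.mem_Icc, hlo, hhi]
      exact ⟨Finset.min'_le _ _ hx, Finset.le_max' _ _ hx⟩
    have hcle : (D.X t).card ≤ (Finset.Icc (D.lo t) (D.hi t)).card :=
      Finset.card_le_card hsub
    have hm : D.m t = ((D.X t).card : ℤ) := rfl
    have h0 : 0 < (D.X t).card := Finset.card_pos.2 hnet
    have hc2 := hcard (D.lo t) (D.hi t)
    have : ((D.X t).card : ℤ) ≤ ((Finset.Icc (D.lo t) (D.hi t)).card : ℤ) := by
      exact_mod_cast hcle
    have hminle : D.lo t ≤ D.hi t := by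
      rw [hlo, hhi]; exact Finset.min'_le _ _ hmem2
    refine ⟨by omega, hminle, by omega, by omega, by omega⟩
  -- pair inequalities from rigidity
  have hnp : ∀ t, i ≤ t → t + 1 ≤ i + k → ¬Odd t → D.hi t + D.hi (t + 1) ≤ S.l - 1 := by
    intro t h1 h2 het
    exact (hb2 t (by omega) (by omega) (Int.not_odd_iff_even.1 het)).1
  have hlp : ∀ t, i ≤ t → t + 1 ≤ i + k → Odd t → S.l + 1 ≤ D.lo t + D.lo (t + 1) := by
    intro t h1 h2 hot
    exact (hb1 t (by omega) (by omega) hot).2.1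
  -- rigidity condition (b3)
  have hRRI : ∀ t, 2 ≤ t → t ≤ S.p → D.R ∩ D.RI t = ∅ := fun t h1 h2 => (hb3 t h1 h2).1
  have hBBI : ∀ t, 2 ≤ t → t ≤ S.p → D.B ∩ D.BI t = ∅ := fun t h1 h2 => (hb3 t h1 h2).2
  -- descriptions of the anchor intervals
  have hRIodd : ∀ t u : ℤ, u = t - 1 → Odd t →
      D.RI t = Finset.Icc (S.s u - (S.l - D.lo t) + 1) (S.s u) := by
    intro t u hu ho; subst hu; rw [CDatum.RI, if_pos ho]
  have hRIeven : ∀ t u : ℤ, u = t - 1 → ¬Odd t →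
      D.RI t = Finset.Icc (S.s u) (S.s u + (S.l - D.lo t) - 1) := by
    intro t u hu ho; subst hu; rw [CDatum.RI, if_neg ho]
  have hBIodd : ∀ t : ℤ, Odd t → D.BI t = Finset.Icc (S.s t) (S.s t + D.hi t - 1) := by
    intro t ho; rw [CDatum.BI, if_pos ho]
  have hBIeven : ∀ t : ℤ, ¬Odd t → D.BI t = Finset.Icc (S.s t - D.hi t + 1) (S.s t) := by
    intro t ho; rw [CDatum.BI, if_neg ho]
  -- position: everything in RI t is to the left of everything in BI t
  have hposn : ∀ t, i ≤ t → t ≤ i + k → ∀ u ∈ D.RI t, ∀ v ∈ D.BI t, u < v := by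
    intro t h1 h2 u hu v hv
    have hXft := hXf t h1 h2
    rcases Int.even_or_odd t with he | ho
    · have hne := Int.not_odd_iff_even.2 he
      rw [hRIeven t (t - 1) rfl hne] at hu
      rw [hBIeven t hne] at hv
      rw [Finset.mem_Icc] at hu hv
      have hg := hgapE (t - 1) t rfl (by omega) (by omega) hne
      omega
    · rw [hRIodd t (t - 1) rfl ho] at hu
      rw [hBIodd t ho] at hv
      rw [Finset.mem_Icc] at hu hv
      have hg := hgap (t - 1) t rfl (by omega) (by omega)
      omega
  -- the pieces
  set P : ℤ → Finset ℤ := fun t =>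
    if Odd t then
      if h1 : D.B ∩ D.RI t = ∅ then (if i < t then D.RI t \ D.BI (t - 1) else D.RI t)
      else if h2 : D.R ∩ D.BI t = ∅ then
        (if t < i + k then D.BI t \ D.RI (t + 1) else D.BI t)
      else if h3 : ∃ z, (∃ x ∈ D.B ∩ D.RI t, x < z) ∧
          (∃ y ∈ D.R ∩ D.BI t, z + S.l - 2 < y) ∧
          Finset.Icc z (z + S.l - 2) ∩ (D.R ∪ D.B) = ∅ then
        Finset.Icc h3.choose (h3.choose + S.l - 2) \
          ((if i < t then D.BI (t - 1) else ∅) ∪ (if t < i + k then D.RI (t + 1) else ∅))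
      else ∅
    else (if t < i + k then D.BI t else D.RI t) with hPdef
  have hPeven1 : ∀ t, ¬Odd t → t < i + k → P t = D.BI t := by
    intro t ht h; simp only [hPdef]; rw [if_neg ht, if_pos h]
  have hPeven2 : ∀ t, ¬Odd t → ¬(t < i + k) → P t = D.RI t := by
    intro t ht h; simp only [hPdef]; rw [if_neg ht, if_neg h]
  -- inclusion of even anchors into the neighbouring odd anchors
  have hBIsub : ∀ t, i ≤ t → t + 1 ≤ i + k → ¬Odd t → D.BI t ⊆ D.RI (t + 1) := by
    intro t h1 h2 het
    have hodd1 : Odd (t + 1) := by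
      rcases Int.not_odd_iff_even.1 het with ⟨r, hr⟩; exact ⟨r, by omega⟩
    rw [hBIeven t het, hRIodd (t + 1) t (by ring) hodd1]
    intro x hx
    rw [Finset.mem_Icc] at *
    have f1 := hXf t h1 (by omega)
    have f2 := hXf (t + 1) (by omega) h2
    have f3 := hnp t h1 h2 het
    omega
  have hRIsub : ∀ t, i + 1 ≤ t → t ≤ i + k → ¬Odd t → D.RI t ⊆ D.BI (t - 1) := by
    intro t h1 h2 het
    have hodd1 : Odd (t - 1) := by
      rcases Int.not_odd_iff_even.1 het with ⟨r, hr⟩; exact ⟨r - 1, by omega⟩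
    rw [hRIeven t (t - 1) rfl het, hBIodd (t - 1) hodd1]
    intro x hx
    rw [Finset.mem_Icc] at *
    have f1 := hXf t (by omega) h2
    have f2 := hXf (t - 1) (by omega) (by omega)
    have f3 := hlp (t - 1) (by omega) (by omega) hodd1
    rw [show t - 1 + 1 = t by ring] at f3
    omega
  -- even pieces are free
  have hfreeE : ∀ t, i ≤ t → t ≤ i + k → ¬Odd t → P t ∩ (D.R ∪ D.B) = ∅ := by
    intro t h1 h2 het
    rw [Finset.eq_empty_iff_forall_notMem]
    intro x hx
    rw [Finset.mem_inter, Finset.mem_union] at hx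
    obtain ⟨hxP, hxRB⟩ := hx
    by_cases hlt : t < i + k
    · rw [hPeven1 t het hlt] at hxP
      rcases hxRB with hz | hz
      · exact hnotmem _ _ (hRRI (t + 1) (by omega) (by omega)) x hz
          (hBIsub t h1 (by omega) het hxP)
      · exact hnotmem _ _ (hBBI t (by omega) (by omega)) x hz hxP
    · rw [hPeven2 t het hlt] at hxP
      rcases hxRB with hz | hz
      · exact hnotmem _ _ (hRRI t (by omega) (by omega)) x hz hxP
      · exact hnotmem _ _ (hBBI (t - 1) (by omega) (by omega)) x hz
          (hRIsub t (by omega) h2 het hxP)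
  -- even pieces: size
  have hsizeE : ∀ t, i ≤ t → t ≤ i + k → ¬Odd t →
      D.m t ≤ ((P t).card : ℤ) ∧ (i < t → t < i + k → D.m t + 1 ≤ ((P t).card : ℤ)) := by
    intro t h1 h2 het
    have hXft := hXf t h1 h2
    by_cases hlt : t < i + k
    · rw [hPeven1 t het hlt, hBIeven t het, hcard]
      constructor
      · omega
      · intro hit _
        have hodd1 : Odd (t - 1) := by
          rcases Int.not_odd_iff_even.1 het with ⟨r, hr⟩; exact ⟨r - 1, by omega⟩
        have f2 := hXf (t - 1) (by omega) (by omega)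
        have f3 := hlp (t - 1) (by omega) (by omega) hodd1
        rw [show t - 1 + 1 = t by ring] at f3
        omega
    · rw [hPeven2 t het hlt, hRIeven t (t - 1) rfl het, hcard]
      exact ⟨by omega, fun _ h => absurd h hlt⟩
  -- specification of the odd pieces
  have hspecO : ∀ t, i ≤ t → t ≤ i + k → Odd t →
      (P t ∩ (D.R ∪ D.B) = ∅) ∧
      (D.m t ≤ ((P t).card : ℤ)) ∧
      (P t ⊆ Finset.Icc (S.s (t - 1) - (S.l - D.lo t) + 1) (S.s t + D.hi t - 1)) ∧
      (i < t → Disjoint (P t) (D.BI (t - 1))) ∧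
      (t < i + k → Disjoint (P t) (D.RI (t + 1))) := by
    intro t h1 h2 hodd
    have hXft := hXf t h1 h2
    have hg := hgap (t - 1) t rfl (by omega) (by omega)
    have het1 : ¬Odd (t - 1) := by
      rcases hodd with ⟨r, hr⟩; exact Int.not_odd_iff_even.2 ⟨r, by omega⟩
    have het2 : ¬Odd (t + 1) := by
      rcases hodd with ⟨r, hr⟩; exact Int.not_odd_iff_even.2 ⟨r + 1, by omega⟩
    by_cases hA : D.B ∩ D.RI t = ∅
    · -- case α
      have hPt : P t = (if i < t then D.RI t \ D.BI (t - 1) else D.RI t) := by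
        simp only [hPdef]; rw [if_pos hodd, dif_pos hA]
      have hsubRI : P t ⊆ D.RI t := by
        rw [hPt]; split_ifs
        · exact Finset.sdiff_subset
        · exact subset_rfl
      refine ⟨?_, ?_, ?_, ?_, ?_⟩
      · rw [Finset.eq_empty_iff_forall_notMem]
        intro u hu
        rw [Finset.mem_inter, Finset.mem_union] at hu
        obtain ⟨huP, huRB⟩ := hu
        rcases huRB with hz | hz
        · exact hnotmem _ _ (hRRI t (by omega) (by omega)) u hz (hsubRI huP)
        · exact hnotmem _ _ hA u hz (hsubRI huP)
      · by_cases hit : i < t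
        · have f2 := hXf (t - 1) (by omega) (by omega)
          have f3 := hnp (t - 1) (by omega) (by omega) het1
          rw [show t - 1 + 1 = t by ring] at f3
          have hsub2 : Finset.Icc (S.s (t - 1) - (S.l - D.lo t) + 1)
              (S.s (t - 1) - D.hi (t - 1)) ⊆ P t := by
            rw [hPt, if_pos hit]
            intro u hu
            rw [Finset.mem_Icc] at hu
            rw [Finset.mem_sdiff, hRIodd t (t - 1) rfl hodd, hBIeven (t - 1) het1,
              Finset.mem_Icc, Finset.mem_Icc]
            omega
          have hle : ((Finset.Icc (S.s (t - 1) - (S.l - D.lo t) + 1)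
              (S.s (t - 1) - D.hi (t - 1))).card : ℤ) ≤ ((P t).card : ℤ) := by
            exact_mod_cast Finset.card_le_card hsub2
          rw [hcard] at hle
          omega
        · rw [hPt, if_neg hit, hRIodd t (t - 1) rfl hodd, hcard]
          omega
      · refine hsubRI.trans ?_
        rw [hRIodd t (t - 1) rfl hodd]
        intro u hu
        rw [Finset.mem_Icc] at *
        omega
      · intro hit
        rw [hPt, if_pos hit]
        exact Finset.sdiff_disjoint
      · intro hlt
        rw [Finset.disjoint_left]
        intro u huP huR
        have hu1 := hsubRI huP
        rw [hRIodd t (t - 1) rfl hodd, Finset.mem_Icc] at hu1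
        rw [hRIeven (t + 1) t (by ring) het2, Finset.mem_Icc] at huR
        have f2 := hXf (t + 1) (by omega) (by omega)
        omega
    · by_cases hB : D.R ∩ D.BI t = ∅
      · -- case β
        have hPt : P t = (if t < i + k then D.BI t \ D.RI (t + 1) else D.BI t) := by
          simp only [hPdef]; rw [if_pos hodd, dif_neg hA, dif_pos hB]
        have hsubBI : P t ⊆ D.BI t := by
          rw [hPt]; split_ifs
          · exact Finset.sdiff_subset
          · exact subset_rfl
        refine ⟨?_, ?_, ?_, ?_, ?_⟩
        · rw [Finset.eq_empty_iff_forall_notMem]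
          intro u hu
          rw [Finset.mem_inter, Finset.mem_union] at hu
          obtain ⟨huP, huRB⟩ := hu
          rcases huRB with hz | hz
          · exact hnotmem _ _ hB u hz (hsubBI huP)
          · exact hnotmem _ _ (hBBI t (by omega) (by omega)) u hz (hsubBI huP)
        · by_cases hlt : t < i + k
          · have f2 := hXf (t + 1) (by omega) (by omega)
            have f3 := hlp t h1 (by omega) hodd
            have hsub2 : Finset.Icc (S.s t + (S.l - D.lo (t + 1)))
                (S.s t + D.hi t - 1) ⊆ P t := by
              rw [hPt, if_pos hlt]
              intro u hu
              rw [Finset.mem_Icc] at hu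
              rw [Finset.mem_sdiff, hBIodd t hodd, hRIeven (t + 1) t (by ring) het2,
                Finset.mem_Icc, Finset.mem_Icc]
              omega
            have hle : ((Finset.Icc (S.s t + (S.l - D.lo (t + 1)))
                (S.s t + D.hi t - 1)).card : ℤ) ≤ ((P t).card : ℤ) := by
              exact_mod_cast Finset.card_le_card hsub2
            rw [hcard] at hle
            omega
          · rw [hPt, if_neg hlt, hBIodd t hodd, hcard]
            omega
        · refine hsubBI.trans ?_
          rw [hBIodd t hodd]
          intro u hu
          rw [Finset.mem_Icc] at *
          omega
        · intro hit
          rw [Finset.disjoint_left]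
          intro u huP huB
          have hu1 := hsubBI huP
          rw [hBIodd t hodd, Finset.mem_Icc] at hu1
          rw [hBIeven (t - 1) het1, Finset.mem_Icc] at huB
          omega
        · intro hlt
          rw [hPt, if_pos hlt]
          exact Finset.sdiff_disjoint
      · -- case γ : a free window
        obtain ⟨x, hx⟩ := Finset.nonempty_iff_ne_empty.2 hA
        obtain ⟨y, hy⟩ := Finset.nonempty_iff_ne_empty.2 hB
        have hxy : x < y :=
          hposn t h1 h2 x (Finset.mem_inter.1 hx).2 y (Finset.mem_inter.1 hy).2
        obtain ⟨z, hz1, hz2, hz3⟩ :=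
          ha x (Finset.mem_inter.1 hx).1 y (Finset.mem_inter.1 hy).1 hxy
        have h3 : ∃ z, (∃ x ∈ D.B ∩ D.RI t, x < z) ∧
            (∃ y ∈ D.R ∩ D.BI t, z + S.l - 2 < y) ∧
            Finset.Icc z (z + S.l - 2) ∩ (D.R ∪ D.B) = ∅ :=
          ⟨z, ⟨x, hx, hz1⟩, ⟨y, hy, hz2⟩, hz3⟩
        have hPt : P t = Finset.Icc h3.choose (h3.choose + S.l - 2) \
            ((if i < t then D.BI (t - 1) else ∅) ∪
              (if t < i + k then D.RI (t + 1) else ∅)) := by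
          simp only [hPdef]; rw [if_pos hodd, dif_neg hA, dif_neg hB, dif_pos h3]
        obtain ⟨⟨x', hx', hzx⟩, ⟨y', hy', hzy⟩, hzfree⟩ := h3.choose_spec
        have hx'RI : x' ∈ D.RI t := (Finset.mem_inter.1 hx').2
        have hy'BI : y' ∈ D.BI t := (Finset.mem_inter.1 hy').2
        rw [hRIodd t (t - 1) rfl hodd, Finset.mem_Icc] at hx'RI
        rw [hBIodd t hodd, Finset.mem_Icc] at hy'BI
        have hWsub : P t ⊆ Finset.Icc h3.choose (h3.choose + S.l - 2) := by
          rw [hPt]; exact Finset.sdiff_subset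
        refine ⟨?_, ?_, ?_, ?_, ?_⟩
        · rw [Finset.eq_empty_iff_forall_notMem]
          intro u hu
          rw [Finset.mem_inter] at hu
          exact hnotmem _ _ hzfree u (hWsub hu.1) hu.2
        · -- size of the trimmed window
          have hsubW : Finset.Icc h3.choose (h3.choose + S.l - 2) ⊆
              P t ∪ ((if i < t then D.BI (t - 1) else ∅) ∪
                (if t < i + k then D.RI (t + 1) else ∅)) := by
            intro u hu
            rw [Finset.mem_union]
            by_cases hT : u ∈ (if i < t then D.BI (t - 1) else ∅) ∪
              (if t < i + k then D.RI (t + 1) else ∅)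
            · exact Or.inr hT
            · exact Or.inl (by rw [hPt, Finset.mem_sdiff]; exact ⟨hu, hT⟩)
          have hchain : ((Finset.Icc h3.choose (h3.choose + S.l - 2)).card : ℤ) ≤
              ((P t).card : ℤ) +
              (((if i < t then D.BI (t - 1) else ∅)).card : ℤ) +
              (((if t < i + k then D.RI (t + 1) else ∅)).card : ℤ) := by
            have u1 := Finset.card_le_card hsubW
            have u2 := Finset.card_union_le (P t)
              ((if i < t then D.BI (t - 1) else ∅) ∪ (if t < i + k then D.RI (t + 1) else ∅))
            have u3 := Finset.card_union_le (if i < t then D.BI (t - 1) else ∅)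
              (if t < i + k then D.RI (t + 1) else ∅)
            push_cast
            push_cast at u1 u2 u3
            omega
          have hWcard : ((Finset.Icc h3.choose (h3.choose + S.l - 2)).card : ℤ) = S.l - 1 := by
            rw [hcard]; omega
          by_cases hit : i < t
          · have f2 := hXf (t - 1) (by omega) (by omega)
            have f3 := hnp (t - 1) (by omega) (by omega) het1
            rw [show t - 1 + 1 = t by ring] at f3
            have c1 : (((if i < t then D.BI (t - 1) else ∅)).card : ℤ) = D.hi (t - 1) := by
              rw [if_pos hit, hBIeven (t - 1) het1, hcard]; omega
            by_cases hlt : t < i + k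
            · have f4 := hXf (t + 1) (by omega) (by omega)
              have f5 := hlp t h1 (by omega) hodd
              have c2 : (((if t < i + k then D.RI (t + 1) else ∅)).card : ℤ) =
                  S.l - D.lo (t + 1) := by
                rw [if_pos hlt, hRIeven (t + 1) t (by ring) het2, hcard]; omega
              rw [c1, c2, hWcard] at hchain
              omega
            · have c2 : (((if t < i + k then D.RI (t + 1) else ∅)).card : ℤ) = 0 := by
                rw [if_neg hlt]; simp
              rw [c1, c2, hWcard] at hchain
              omega
          · have hti : t = i := by omega
            have hlt : t < i + k := by omega
            have f4 := hXf (t + 1) (by omega) (by omega)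
            have f5 := hlp t h1 (by omega) hodd
            have c1 : (((if i < t then D.BI (t - 1) else ∅)).card : ℤ) = 0 := by
              rw [if_neg hit]; simp
            have c2 : (((if t < i + k then D.RI (t + 1) else ∅)).card : ℤ) =
                S.l - D.lo (t + 1) := by
              rw [if_pos hlt, hRIeven (t + 1) t (by ring) het2, hcard]; omega
            rw [c1, c2, hWcard] at hchain
            omega
        · intro u hu
          have hu1 := hWsub hu
          rw [Finset.mem_Icc] at hu1
          rw [Finset.mem_Icc]
          omega
        · intro hit
          rw [hPt, Finset.disjoint_left]
          intro u hu hu2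
          rw [Finset.mem_sdiff, Finset.mem_union] at hu
          exact hu.2 (Or.inl (by rw [if_pos hit]; exact hu2))
        · intro hlt
          rw [hPt, Finset.disjoint_left]
          intro u hu hu2
          rw [Finset.mem_sdiff, Finset.mem_union] at hu
          exact hu.2 (Or.inr (by rw [if_pos hlt]; exact hu2))
  -- upper bounds for pieces with t < i + k
  have hub : ∀ t, i ≤ t → t < i + k → ∀ u ∈ P t,
      (Odd t → u ≤ S.s t + S.l - 2) ∧ (¬Odd t → u ≤ S.s t) := by
    intro t h1 h2 u hu
    constructor
    · intro ho
      have hh := (hspecO t h1 (by omega) ho).2.2.1 hu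
      rw [Finset.mem_Icc] at hh
      have := hXf t h1 (by omega)
      omega
    · intro he
      rw [hPeven1 t he h2, hBIeven t he, Finset.mem_Icc] at hu
      omega
  -- lower bounds for pieces
  have hlb : ∀ t', i ≤ t' → t' ≤ i + k → ∀ u ∈ P t',
      (Odd t' → S.s (t' - 1) - (S.l - D.lo t') + 1 ≤ u) ∧
      (¬Odd t' → t' < i + k → S.s t' - S.l + 2 ≤ u) ∧
      (¬Odd t' → ¬(t' < i + k) → S.s (t' - 1) ≤ u) := by
    intro t' h1 h2 u hu
    refine ⟨?_, ?_, ?_⟩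
    · intro ho
      have hh := (hspecO t' h1 h2 ho).2.2.1 hu
      rw [Finset.mem_Icc] at hh
      omega
    · intro he hl
      rw [hPeven1 t' he hl, hBIeven t' he, Finset.mem_Icc] at hu
      have := hXf t' h1 h2
      omega
    · intro he hl
      rw [hPeven2 t' he hl, hRIeven t' (t' - 1) rfl he, Finset.mem_Icc] at hu
      omega
  -- pairwise disjointness
  have hPdisj : ∀ t, i ≤ t → ∀ t', t' ≤ i + k → t < t' → Disjoint (P t) (P t') := by
    intro t h1 t' h2 hlt
    have h2t : t ≤ i + k := by omega
    have h1t' : i ≤ t' := by omega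
    by_cases hadj : t' = t + 1
    · rcases Int.even_or_odd t with he | ho
      · -- t even, t' odd : use CD1 of t'
        have hne := Int.not_odd_iff_even.2 he
        have hot' : Odd t' := by
          subst hadj; rcases he with ⟨r, hr⟩; exact ⟨r, by omega⟩
        have hd1 := (hspecO t' h1t' h2 hot').2.2.2.1 (by omega)
        rw [hPeven1 t hne (by omega)]
        subst hadj
        rw [show t + 1 - 1 = t by ring] at hd1
        exact hd1.symm
      · -- t odd, t' even
        have hne' : ¬Odd t' := by
          subst hadj; rcases ho with ⟨r, hr⟩
          exact Int.not_odd_iff_even.2 ⟨r + 1, by omega⟩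
        by_cases hl : t' < i + k
        · subst hadj
          rw [Finset.disjoint_left]
          intro u huT huT'
          have b1 := (hub t h1 (by omega) u huT).1 ho
          have b2 := (hlb (t + 1) (by omega) h2 u huT').2.1 hne' hl
          have hgg := hgapE t (t + 1) (by ring) (by omega) (by omega) hne'
          omega
        · have hd2 := (hspecO t h1 h2t ho).2.2.2.2 (by omega)
          rw [hPeven2 t' hne' hl]
          subst hadj
          exact hd2
    · -- t' ≥ t + 2 : interval separation
      have ht2 : t + 2 ≤ t' := by omega
      rw [Finset.disjoint_left]
      intro u huT huT'
      have hmono1 : S.s (t + 1) ≤ S.s (t' - 1) :=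
        hmono (t + 1) (t' - 1) (by omega) (by omega) (by omega)
      have hmono2 : S.s (t + 1) ≤ S.s t' := by
        have := hmono (t + 1) t' (by omega) (by omega) (by omega); omega
      have hbT := hub t h1 (by omega) u huT
      have hbT' := hlb t' h1t' h2 u huT'
      have hXft' := hXf t' h1t' h2
      -- common lower bound for u from t'
      have hlow : S.s (t + 1) - S.l + 2 ≤ u := by
        rcases Int.even_or_odd t' with he' | ho'
        · have hne' := Int.not_odd_iff_even.2 he'
          by_cases hl : t' < i + k
          · have := hbT'.2.1 hne' hl; omega
          · have := hbT'.2.2 hne' hl; omega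
        · have := hbT'.1 ho'; omega
      rcases Int.even_or_odd t with he | ho
      · have hne := Int.not_odd_iff_even.2 he
        have := hbT.2 hne
        have hgg := hgap t (t + 1) (by ring) (by omega) (by omega)
        omega
      · have := hbT.1 ho
        have hne1 : ¬Odd (t + 1) := by
          rcases ho with ⟨r, hr⟩; exact Int.not_odd_iff_even.2 ⟨r + 1, by omega⟩
        have hgg := hgapE t (t + 1) (by ring) (by omega) (by omega) hne1
        omega
  -- the pieces are inside Ξ
  have hxiLo_le : D.xiLo i ≤ S.s (i - 1) := by
    rw [CDatum.xiLo]
    split_ifs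
    · have := hXf i (by omega) (by omega); omega
    · exact le_refl _
  have hxiHi_ge : S.s (i + k) ≤ D.xiHi (i + k) := by
    rw [CDatum.xiHi]
    split_ifs
    · exact le_refl _
    · have := hXf (i + k) (by omega) (by omega); omega
  have hXiSub : ∀ t, i ≤ t → t ≤ i + k → P t ⊆ D.Xi i k := by
    intro t h1 h2 u hu
    rw [CDatum.Xi, Finset.mem_Icc]
    have hXft := hXf t h1 h2
    have hgi := hgap (i - 1) i rfl (by omega) (by omega)
    have hgk := hgap (i + k - 1) (i + k) (by ring) (by omega) (by omega)
    constructor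
    · -- lower bound
      by_cases hti : t = i
      · subst hti
        rcases Int.even_or_odd t with he | ho
        · have hne := Int.not_odd_iff_even.2 he
          have := (hlb t h1 h2 u hu).2.1 hne (by omega)
          omega
        · have := (hlb t h1 h2 u hu).1 ho
          rw [CDatum.xiLo, if_pos ho]
          omega
      · have hm1 : S.s i ≤ S.s (t - 1) := hmono i (t - 1) (by omega) (by omega) (by omega)
        have hm2 : S.s i ≤ S.s t := hmono i t (by omega) (by omega) (by omega)
        have hbT' := hlb t h1 h2 u hu
        rcases Int.even_or_odd t with he | ho
        · have hne := Int.not_odd_iff_even.2 he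
          by_cases hl : t < i + k
          · have := hbT'.2.1 hne hl; omega
          · have := hbT'.2.2 hne hl; omega
        · have := hbT'.1 ho; omega
    · -- upper bound
      by_cases htk : t = i + k
      · subst htk
        rcases Int.even_or_odd (i + k) with he | ho
        · have hne := Int.not_odd_iff_even.2 he
          rw [hPeven2 (i + k) hne (by omega), hRIeven (i + k) (i + k - 1) (by ring) hne,
            Finset.mem_Icc] at hu
          omega
        · have hh := (hspecO (i + k) (by omega) (by omega) ho).2.2.1 hu
          rw [Finset.mem_Icc] at hh
          rw [CDatum.xiHi, if_neg (Int.not_even_iff_odd.2 ho)]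
          omega
      · have hm2 : S.s t ≤ S.s (i + k - 1) := hmono t (i + k - 1) (by omega) (by omega) (by omega)
        have hbT := hub t h1 (by omega) u hu
        rcases Int.even_or_odd t with he | ho
        · have := hbT.2 (Int.not_odd_iff_even.2 he); omega
        · have := hbT.1 ho; omega
  -- collected facts
  have hsizeAll : ∀ t ∈ Finset.Icc i (i + k), D.m t ≤ ((P t).card : ℤ) := by
    intro t ht; rw [Finset.mem_Icc] at ht
    rcases Int.even_or_odd t with he | ho
    · exact (hsizeE t ht.1 ht.2 (Int.not_odd_iff_even.2 he)).1
    · exact (hspecO t ht.1 ht.2 ho).2.1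
  have hfreeAll : ∀ t, i ≤ t → t ≤ i + k → P t ∩ (D.R ∪ D.B) = ∅ := by
    intro t h1 h2
    rcases Int.even_or_odd t with he | ho
    · exact hfreeE t h1 h2 (Int.not_odd_iff_even.2 he)
    · exact (hspecO t h1 h2 ho).1
  have hGd : ∀ a ∈ Finset.Icc i (i + k), ∀ b ∈ Finset.Icc i (i + k), a ≠ b →
      Disjoint (P a) (P b) := by
    intro a ha b hb hab
    rw [Finset.mem_Icc] at ha hb
    rcases lt_or_gt_of_ne hab with h | h
    · exact hPdisj a ha.1 b hb.2 h
    · exact (hPdisj b hb.1 a ha.2 h).symm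
  have hGsub : (Finset.Icc i (i + k)).biUnion P ⊆ D.Xi i k \ (D.R ∪ D.B) := by
    intro u hu
    rw [Finset.mem_biUnion] at hu
    obtain ⟨t, ht, hut⟩ := hu
    rw [Finset.mem_Icc] at ht
    rw [Finset.mem_sdiff]
    exact ⟨hXiSub t ht.1 ht.2 hut,
      fun hc => hnotmem _ _ (hfreeAll t ht.1 ht.2) u hut hc⟩
  have hGcard : (((Finset.Icc i (i + k)).biUnion P).card : ℤ) =
      ∑ t ∈ Finset.Icc i (i + k), ((P t).card : ℤ) := by
    rw [Finset.card_biUnion hGd]; push_cast; rfl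
  have hsum : ∑ j ∈ Finset.Icc (0 : ℤ) k, D.m (i + j) =
      ∑ t ∈ Finset.Icc i (i + k), D.m t := by
    apply Finset.sum_nbij' (fun j => i + j) (fun t => t - i) <;>
      simp [Finset.mem_Icc] <;> omega
  have hGle : (((Finset.Icc i (i + k)).biUnion P).card : ℤ) ≤
      ((D.Xi i k \ (D.R ∪ D.B)).card : ℤ) := by
    exact_mod_cast Finset.card_le_card hGsub
  -- an auxiliary device: one extra disjoint free set suffices
  have hextra : ∀ E : Finset ℤ, E ⊆ D.Xi i k → E ∩ (D.R ∪ D.B) = ∅ →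
      (∀ t, i ≤ t → t ≤ i + k → Disjoint E (P t)) → 1 ≤ (E.card : ℤ) →
      ∑ j ∈ Finset.Icc (0 : ℤ) k, D.m (i + j) + 1 ≤
        ((D.Xi i k \ (D.R ∪ D.B)).card : ℤ) := by
    intro E hEsub hEfree hEdisj hE1
    have hdisjGE : Disjoint ((Finset.Icc i (i + k)).biUnion P) E := by
      rw [Finset.disjoint_biUnion_left]
      intro t ht; rw [Finset.mem_Icc] at ht
      exact (hEdisj t ht.1 ht.2).symm
    have hsubU : (Finset.Icc i (i + k)).biUnion P ∪ E ⊆ D.Xi i k \ (D.R ∪ D.B) := by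
      rw [Finset.union_subset_iff]
      refine ⟨hGsub, ?_⟩
      intro u hu
      rw [Finset.mem_sdiff]
      exact ⟨hEsub hu, fun hc => hnotmem _ _ hEfree u hu hc⟩
    have hcardU : (((Finset.Icc i (i + k)).biUnion P ∪ E).card : ℤ) =
        (((Finset.Icc i (i + k)).biUnion P).card : ℤ) + (E.card : ℤ) := by
      rw [Finset.card_union_of_disjoint hdisjGE]; push_cast; ring
    have hle2 : (((Finset.Icc i (i + k)).biUnion P ∪ E).card : ℤ) ≤
        ((D.Xi i k \ (D.R ∪ D.B)).card : ℤ) := by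
      exact_mod_cast Finset.card_le_card hsubU
    have hsumle : ∑ t ∈ Finset.Icc i (i + k), D.m t ≤
        ∑ t ∈ Finset.Icc i (i + k), ((P t).card : ℤ) := Finset.sum_le_sum hsizeAll
    rw [hsum]
    omega
  -- the key inequality
  have hkey : ∑ j ∈ Finset.Icc (0 : ℤ) k, D.m (i + j) + 1 ≤
      ((D.Xi i k \ (D.R ∪ D.B)).card : ℤ) := by
    by_cases hE : ∃ e, i + 1 ≤ e ∧ e ≤ i + k - 1 ∧ ¬Odd e
    · -- a strict even piece exists
      obtain ⟨e, he1, he2, heE⟩ := hE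
      have hstrict := (hsizeE e (by omega) (by omega) heE).2 (by omega) (by omega)
      have hlt : ∑ t ∈ Finset.Icc i (i + k), D.m t <
          ∑ t ∈ Finset.Icc i (i + k), ((P t).card : ℤ) :=
        Finset.sum_lt_sum hsizeAll ⟨e, Finset.mem_Icc.2 ⟨by omega, by omega⟩, by omega⟩
      rw [hsum]
      omega
    · -- i is even and k = 2
      have hie : ¬Odd i := by
        intro ho
        exact hE ⟨i + 1, by omega, by omega, by
          rcases ho with ⟨r, hr⟩; exact Int.not_odd_iff_even.2 ⟨r + 1, by omega⟩⟩
      have hk2 : k = 2 := by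
        by_contra hk3
        refine hE ⟨i + 2, by omega, by omega, ?_⟩
        rcases Int.not_odd_iff_even.1 hie with ⟨r, hr⟩
        exact Int.not_odd_iff_even.2 ⟨r + 1, by omega⟩
      have hoik : ¬Odd (i + k) := by
        rcases Int.not_odd_iff_even.1 hie with ⟨r, hr⟩
        exact Int.not_odd_iff_even.2 ⟨r + 1, by omega⟩
      have ho1 : Odd (i + 1) := by
        rcases Int.not_odd_iff_even.1 hie with ⟨r, hr⟩
        exact ⟨r, by omega⟩
      have f_i := hXf i (by omega) (by omega)
      have f_k := hXf (i + k) (by omega) (by omega)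
      have f_m := hXf (i + 1) (by omega) (by omega)
      have hgi := hgap (i - 1) i rfl (by omega) (by omega)
      have hgiE := hgapE (i - 1) i rfl (by omega) (by omega) hie
      have hgm := hgap i (i + 1) (by ring) (by omega) (by omega)
      have hgkE := hgapE (i + k - 1) (i + k) (by ring) (by omega) (by omega) hoik
      have hmk : S.s (i + 1) ≤ S.s (i + k - 1) :=
        hmono (i + 1) (i + k - 1) (by omega) (by omega) (by omega)
      have hxiLoE : D.xiLo i = S.s (i - 1) := by rw [CDatum.xiLo, if_neg hie]
      have hxiHiE : D.xiHi (i + k) = S.s (i + k) := by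
        rw [CDatum.xiHi, if_pos (Int.not_odd_iff_even.1 hoik)]
      by_cases hC1 : D.B ∩ D.RI i = ∅
      · -- extra free set : RI i
        refine hextra (D.RI i) ?_ ?_ ?_ ?_
        · intro u hu
          rw [hRIeven i (i - 1) rfl hie, Finset.mem_Icc] at hu
          rw [CDatum.Xi, Finset.mem_Icc, hxiLoE, hxiHiE]
          have hmm : S.s i ≤ S.s (i + k) := hmono i (i + k) (by omega) (by omega) (by omega)
          omega
        · rw [Finset.eq_empty_iff_forall_notMem]
          intro u hu
          rw [Finset.mem_inter, Finset.mem_union] at hu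
          obtain ⟨huE, huRB⟩ := hu
          rcases huRB with hz | hz
          · exact hnotmem _ _ (hRRI i (by omega) (by omega)) u hz huE
          · exact hnotmem _ _ hC1 u hz huE
        · intro t h1 h2
          rw [Finset.disjoint_left]
          intro u huE huP
          rw [hRIeven i (i - 1) rfl hie, Finset.mem_Icc] at huE
          have hbT' := hlb t h1 h2 u huP
          rcases Int.even_or_odd t with he | ho
          · have hne := Int.not_odd_iff_even.2 he
            by_cases hl : t < i + k
            · have hb2 := hbT'.2.1 hne hl
              have hmm : S.s i ≤ S.s t := hmono i t (by omega) (by omega) (by omega)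
              omega
            · have hb2 := hbT'.2.2 hne hl
              have hmm : S.s i ≤ S.s (t - 1) := hmono i (t - 1) (by omega) (by omega) (by omega)
              have ht1 : i + 1 ≤ t := by omega
              omega
          · have hb2 := hbT'.1 ho
            have hti : t ≠ i := fun h => hie (h ▸ ho)
            have f_t := hXf t h1 h2
            have hmm : S.s i ≤ S.s (t - 1) := hmono i (t - 1) (by omega) (by omega) (by omega)
            omega
        · rw [hRIeven i (i - 1) rfl hie, hcard]
          omega
      · by_cases hC2 : D.R ∩ D.BI (i + k) = ∅
        · -- extra free set : BI (i + k)
          refine hextra (D.BI (i + k)) ?_ ?_ ?_ ?_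
          · intro u hu
            rw [hBIeven (i + k) hoik, Finset.mem_Icc] at hu
            rw [CDatum.Xi, Finset.mem_Icc, hxiLoE, hxiHiE]
            have hmm : S.s (i - 1) ≤ S.s (i + k - 1) :=
              hmono (i - 1) (i + k - 1) (by omega) (by omega) (by omega)
            omega
          · rw [Finset.eq_empty_iff_forall_notMem]
            intro u hu
            rw [Finset.mem_inter, Finset.mem_union] at hu
            obtain ⟨huE, huRB⟩ := hu
            rcases huRB with hz | hz
            · exact hnotmem _ _ hC2 u hz huE
            · exact hnotmem _ _ (hBBI (i + k) (by omega) (by omega)) u hz huE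
          · intro t h1 h2
            rw [Finset.disjoint_left]
            intro u huE huP
            rw [hBIeven (i + k) hoik, Finset.mem_Icc] at huE
            by_cases hl : t < i + k
            · have hbT := hub t h1 hl u huP
              have hmm : S.s t ≤ S.s (i + k - 1) :=
                hmono t (i + k - 1) (by omega) (by omega) (by omega)
              rcases Int.even_or_odd t with he | ho
              · have := hbT.2 (Int.not_odd_iff_even.2 he); omega
              · have := hbT.1 ho; omega
            · have htk : t = i + k := by omega
              subst htk
              rw [hPeven2 (i + k) hoik hl, hRIeven (i + k) (i + k - 1) (by ring) hoik,
                Finset.mem_Icc] at huP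
              omega
          · rw [hBIeven (i + k) hoik, hcard]
            omega
        · -- both fail : a long window
          obtain ⟨x, hx⟩ := Finset.nonempty_iff_ne_empty.2 hC1
          obtain ⟨y, hy⟩ := Finset.nonempty_iff_ne_empty.2 hC2
          have hxRI : x ∈ D.RI i := (Finset.mem_inter.1 hx).2
          have hyBI : y ∈ D.BI (i + k) := (Finset.mem_inter.1 hy).2
          rw [hRIeven i (i - 1) rfl hie, Finset.mem_Icc] at hxRI
          rw [hBIeven (i + k) hoik, Finset.mem_Icc] at hyBI
          have hxy : x < y := by
            have hmm : S.s (i + 1) ≤ S.s (i + k) :=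
              hmono (i + 1) (i + k) (by omega) (by omega) (by omega)
            omega
          obtain ⟨z, hz1, hz2, hz3⟩ :=
            ha x (Finset.mem_inter.1 hx).1 y (Finset.mem_inter.1 hy).1 hxy
          set W := Finset.Icc z (z + S.l - 2) with hW
          set QQ := W \ (D.BI i ∪ D.RI (i + k)) with hQQ
          -- the three pieces
          set FF := D.BI i ∪ (QQ ∪ D.RI (i + k)) with hFF
          have hBIi : D.BI i = Finset.Icc (S.s i - D.hi i + 1) (S.s i) := hBIeven i hie
          have hRIk : D.RI (i + k) =
              Finset.Icc (S.s (i + k - 1)) (S.s (i + k - 1) + (S.l - D.lo (i + k)) - 1) :=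
            hRIeven (i + k) (i + k - 1) (by ring) hoik
          -- freeness of the three pieces
          have hfree1 : ∀ u ∈ D.BI i, u ∉ D.R ∪ D.B := by
            intro u hu hc
            rw [Finset.mem_union] at hc
            rcases hc with hz' | hz'
            · exact hnotmem _ _ (hRRI (i + 1) (by omega) (by omega)) u hz'
                (hBIsub i (by omega) (by omega) hie hu)
            · exact hnotmem _ _ (hBBI i (by omega) (by omega)) u hz' hu
          have hfree3 : ∀ u ∈ D.RI (i + k), u ∉ D.R ∪ D.B := by
            intro u hu hc
            rw [Finset.mem_union] at hc
            rcases hc with hz' | hz'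
            · exact hnotmem _ _ (hRRI (i + k) (by omega) (by omega)) u hz' hu
            · exact hnotmem _ _ (hBBI (i + k - 1) (by omega) (by omega)) u hz'
                (hRIsub (i + k) (by omega) (by omega) hoik hu)
          have hfree2 : ∀ u ∈ QQ, u ∉ D.R ∪ D.B := by
            intro u hu hc
            have : u ∈ W := (Finset.sdiff_subset hu : _)
            exact hnotmem _ _ hz3 u this hc
          -- FF is inside Ξ (minus R ∪ B)
          have hFFsub : FF ⊆ D.Xi i k \ (D.R ∪ D.B) := by
            intro u hu
            rw [Finset.mem_sdiff, CDatum.Xi, Finset.mem_Icc, hxiLoE, hxiHiE]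
            rw [hFF, Finset.mem_union, Finset.mem_union] at hu
            rcases hu with hu | hu | hu
            · have hu' := hu
              rw [hBIi, Finset.mem_Icc] at hu'
              have hmm : S.s i ≤ S.s (i + k) := hmono i (i + k) (by omega) (by omega) (by omega)
              exact ⟨⟨by omega, by omega⟩, hfree1 u hu⟩
            · have hu' : u ∈ W := Finset.sdiff_subset hu
              rw [hW, Finset.mem_Icc] at hu'
              exact ⟨⟨by omega, by omega⟩, hfree2 u hu⟩
            · have hu' := hu
              rw [hRIk, Finset.mem_Icc] at hu'
              have hmm : S.s (i - 1) ≤ S.s (i + k - 1) :=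
                hmono (i - 1) (i + k - 1) (by omega) (by omega) (by omega)
              exact ⟨⟨by omega, by omega⟩, hfree3 u hu⟩
          -- disjointness of the three pieces
          have hd13 : Disjoint (D.BI i) (D.RI (i + k)) := by
            rw [Finset.disjoint_left]
            intro u hu1 hu3
            rw [hBIi, Finset.mem_Icc] at hu1
            rw [hRIk, Finset.mem_Icc] at hu3
            omega
          have hd21 : Disjoint (D.BI i) QQ := by
            rw [Finset.disjoint_right]
            intro u hu2 hu1
            rw [hQQ, Finset.mem_sdiff, Finset.mem_union] at hu2
            exact hu2.2 (Or.inl hu1)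
          have hd23 : Disjoint QQ (D.RI (i + k)) := by
            rw [Finset.disjoint_left]
            intro u hu2 hu3
            rw [hQQ, Finset.mem_sdiff, Finset.mem_union] at hu2
            exact hu2.2 (Or.inr hu3)
          have hFFcard : (FF.card : ℤ) =
              ((D.BI i).card : ℤ) + (QQ.card : ℤ) + ((D.RI (i + k)).card : ℤ) := by
            rw [hFF, Finset.card_union_of_disjoint (by
              rw [Finset.disjoint_union_right]; exact ⟨hd21, hd13⟩),
              Finset.card_union_of_disjoint hd23]
            push_cast; ring
          -- sizes
          have hc1 : D.m i ≤ ((D.BI i).card : ℤ) := by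
            rw [hBIi, hcard]; omega
          have hc3 : D.m (i + k) ≤ ((D.RI (i + k)).card : ℤ) := by
            rw [hRIk, hcard]; omega
          have hlp1 := hlp (i + 1) (by omega) (by omega) ho1
          rw [show i + 1 + 1 = i + k by omega] at hlp1
          have hnp1 := hnp i (by omega) (by omega) hie
          have hc2 : D.m (i + 1) + 1 ≤ (QQ.card : ℤ) := by
            have hsubW : W ⊆ QQ ∪ ((W ∩ D.BI i) ∪ (W ∩ D.RI (i + k))) := by
              intro u hu
              rw [Finset.mem_union, Finset.mem_union]
              by_cases h1' : u ∈ D.BI i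
              · exact Or.inr (Or.inl (Finset.mem_inter.2 ⟨hu, h1'⟩))
              · by_cases h2' : u ∈ D.RI (i + k)
                · exact Or.inr (Or.inr (Finset.mem_inter.2 ⟨hu, h2'⟩))
                · exact Or.inl (by
                    rw [hQQ, Finset.mem_sdiff, Finset.mem_union]
                    exact ⟨hu, fun hc => hc.elim h1' h2'⟩)
            have hchain : ((W.card : ℤ)) ≤ (QQ.card : ℤ) +
                ((W ∩ D.BI i).card : ℤ) + ((W ∩ D.RI (i + k)).card : ℤ) := by
              have u1 := Finset.card_le_card hsubW
              have u2 := Finset.card_union_le QQ ((W ∩ D.BI i) ∪ (W ∩ D.RI (i + k)))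
              have u3 := Finset.card_union_le (W ∩ D.BI i) (W ∩ D.RI (i + k))
              push_cast at u1 u2 u3
              omega
            have hWcard : ((W.card : ℤ)) = S.l - 1 := by rw [hW, hcard]; omega
            by_cases hw : (W ∩ D.BI i).Nonempty
            · obtain ⟨w, hw'⟩ := hw
              rw [Finset.mem_inter, hW, hBIi, Finset.mem_Icc, Finset.mem_Icc] at hw'
              have hWRI : W ∩ D.RI (i + k) = ∅ := by
                rw [Finset.eq_empty_iff_forall_notMem]
                intro u hu
                rw [Finset.mem_inter, hW, hRIk, Finset.mem_Icc, Finset.mem_Icc] at hu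
                have hgm2 : S.l + 1 ≤ S.s (i + 1) - S.s i := hgm
                omega
              have hWBI : ((W ∩ D.BI i).card : ℤ) ≤ D.hi i := by
                have := Finset.card_le_card (Finset.inter_subset_right : W ∩ D.BI i ⊆ D.BI i)
                have hh : ((D.BI i).card : ℤ) = D.hi i := by rw [hBIi, hcard]; omega
                push_cast at this
                omega
              rw [hWRI] at hchain
              simp at hchain
              omega
            · have hWBI : ((W ∩ D.BI i).card : ℤ) = 0 := by
                rw [Finset.not_nonempty_iff_eq_empty.1 hw]; simp
              have hWRI : ((W ∩ D.RI (i + k)).card : ℤ) ≤ S.l - D.lo (i + k) := by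
                have := Finset.card_le_card
                  (Finset.inter_subset_right : W ∩ D.RI (i + k) ⊆ D.RI (i + k))
                have hh : ((D.RI (i + k)).card : ℤ) = S.l - D.lo (i + k) := by
                  rw [hRIk, hcard]; omega
                push_cast at this
                omega
              omega
          -- conclude in this case
          have hsum3 : ∑ t ∈ Finset.Icc i (i + k), D.m t = D.m i + D.m (i + 1) + D.m (i + k) := by
            rw [show Finset.Icc i (i + k) = {i, i + 1, i + k} from by
              ext u; simp [Finset.mem_Icc, Finset.mem_insert]; omega]
            rw [Finset.sum_insert (by simp; omega), Finset.sum_insert (by simp; omega),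
              Finset.sum_singleton]
            ring
          have hFFle : ((FF.card : ℤ)) ≤ ((D.Xi i k \ (D.R ∪ D.B)).card : ℤ) := by
            exact_mod_cast Finset.card_le_card hFFsub
          rw [hsum, hsum3]
          omega
  -- conclusion
  have hins := Finset.card_inter_add_card_sdiff (D.Xi i k) (D.R ∪ D.B)
  have hinsZ : ((D.Xi i k ∩ (D.R ∪ D.B)).card : ℤ) +
      ((D.Xi i k \ (D.R ∪ D.B)).card : ℤ) = ((D.Xi i k).card : ℤ) := by
    exact_mod_cast hins
  rw [Finset.inter_comm (D.R ∪ D.B) (D.Xi i k)]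
  omega
end

section
/- Let (X_i, R, B) be a rigid C-datum, let k ∈ {0, 1}, and let 2 ≤ i ≤ i + k ≤ p with X_{i+j} ≠ ∅ for 0 ≤ j ≤ k. Then: (a) |𝖱_i ∪ … ∪ 𝖱_{i+k}| ≥ Σ_{j=0}^k m_{i+j}, and if k = 1 and i is even the inequality is strict; (b) |𝖡_i ∪ … ∪ 𝖡_{i+k}| ≥ Σ_{j=0}^k m_{i+j}, and if k = 1 and i is odd the inequality is strict. -/
open scoped Classical

namespace CDatum

variable {S : NakSetup}

lemma RI_odd (D : CDatum S) {j : ℤ} (h : Odd j) :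
    D.RI j = Finset.Icc (S.s (j - 1) - (S.l - D.lo j) + 1) (S.s (j - 1)) := by
  unfold CDatum.RI; rw [if_pos h]

lemma RI_even (D : CDatum S) {j : ℤ} (h : Even j) :
    D.RI j = Finset.Icc (S.s (j - 1)) (S.s (j - 1) + (S.l - D.lo j) - 1) := by
  unfold CDatum.RI; rw [if_neg (Int.not_odd_iff_even.mpr h)]

lemma BI_odd (D : CDatum S) {j : ℤ} (h : Odd j) :
    D.BI j = Finset.Icc (S.s j) (S.s j + D.hi j - 1) := by
  unfold CDatum.BI; rw [if_pos h]

lemma BI_even (D : CDatum S) {j : ℤ} (h : Even j) :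
    D.BI j = Finset.Icc (S.s j - D.hi j + 1) (S.s j) := by
  unfold CDatum.BI; rw [if_neg (Int.not_odd_iff_even.mpr h)]

end CDatum

lemma aux_card_Icc (a b : ℤ) : (b + 1 - a) ≤ ((Finset.Icc a b).card : ℤ) := by
  rw [Int.card_Icc]; omega

lemma aux_card_union (a b c e : ℤ) :
    (b + 1 - a) + (e + 1 - c) - max 0 (b + 1 - c)
      ≤ ((Finset.Icc a b ∪ Finset.Icc c e).card : ℤ) := by
  have h := Finset.card_union_add_card_inter (Finset.Icc a b) (Finset.Icc c e)
  have hsub : Finset.Icc a b ∩ Finset.Icc c e ⊆ Finset.Icc c b := by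
    intro x hx
    simp only [Finset.mem_inter, Finset.mem_Icc] at hx ⊢
    omega
  have h2 := Finset.card_le_card hsub
  rw [Int.card_Icc] at h2
  rw [Int.card_Icc, Int.card_Icc] at h
  omega

lemma aux_card_union' (a b c e B : ℤ) (h0 : 0 ≤ B) (h1 : b + 1 - c ≤ B) :
    (b + 1 - a) + (e + 1 - c) - B ≤ ((Finset.Icc a b ∪ Finset.Icc c e).card : ℤ) := by
  have h := aux_card_union a b c e
  have hM : max 0 (b + 1 - c) ≤ B := max_le h0 h1
  omega

lemma aux_facts {S : NakSetup} (D : CDatum S) (i : ℤ) (h : (D.X i).Nonempty) :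
    1 ≤ D.lo i ∧ D.lo i ≤ D.hi i ∧ D.hi i ≤ S.l - 1 ∧ D.m i ≤ D.hi i - D.lo i + 1 := by
  have hlo : D.lo i = (D.X i).min' h := dif_pos h
  have hhi : D.hi i = (D.X i).max' h := dif_pos h
  have hmem1 := D.hX i ((D.X i).min'_mem h)
  have hmem2 := D.hX i ((D.X i).max'_mem h)
  rw [Finset.mem_Icc] at hmem1 hmem2
  have hle : (D.X i).min' h ≤ (D.X i).max' h := Finset.min'_le _ _ (Finset.max'_mem _ _)
  refine ⟨by omega, by omega, by omega, ?_⟩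
  have hsub : D.X i ⊆ Finset.Icc (D.lo i) (D.hi i) := by
    intro x hx
    rw [Finset.mem_Icc, hlo, hhi]
    exact ⟨Finset.min'_le _ _ hx, Finset.le_max' _ _ hx⟩
  have hc := Finset.card_le_card hsub
  rw [Int.card_Icc] at hc
  unfold CDatum.m
  omega

lemma aux_s_even {S : NakSetup} (i : ℤ) (h2 : 2 ≤ i) (hip : i ≤ S.p) (he : Even i) :
    2 * (S.s i - S.s (i - 1)) = S.d * S.l := by
  have h1 := S.hs_even i (by omega) hip he
  have h2' := S.hs_odd (i - 1) (by omega) (by omega)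
    (by rw [Int.odd_iff]; rw [Int.even_iff] at he; omega)
  ring_nf
  ring_nf at h1 h2'
  linarith

lemma aux_s_odd {S : NakSetup} (i : ℤ) (h2 : 2 ≤ i) (hip : i ≤ S.p) (he : Odd i) :
    2 * (S.s i - S.s (i - 1)) = (S.d - 2) * S.l + 4 := by
  have h1 := S.hs_odd i (by omega) hip he
  have h2' := S.hs_even (i - 1) (by omega) (by omega)
    (by rw [Int.even_iff]; rw [Int.odd_iff] at he; omega)
  ring_nf
  ring_nf at h1 h2'
  linarith

lemma aux_dl {S : NakSetup} : 2 * S.l ≤ S.d * S.l ∧ 0 ≤ (S.d - 2) * S.l := by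
  have hl := S.hl
  have hd := S.hd
  constructor
  · nlinarith
  · nlinarith

lemma sum00 (f : ℤ → ℤ) : ∑ j ∈ Finset.Icc (0:ℤ) 0, f j = f 0 := by
  rw [Finset.Icc_self, Finset.sum_singleton]

lemma biUnion00 (f : ℤ → Finset ℤ) : (Finset.Icc (0:ℤ) 0).biUnion f = f 0 := by
  rw [Finset.Icc_self, Finset.singleton_biUnion]

lemma Icc01 : Finset.Icc (0:ℤ) 1 = {0, 1} := by
  ext x
  simp only [Finset.mem_Icc, Finset.mem_insert, Finset.mem_singleton]
  omega

lemma sum01 (f : ℤ → ℤ) : ∑ j ∈ Finset.Icc (0:ℤ) 1, f j = f 0 + f 1 := by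
  rw [Icc01, Finset.sum_insert (by simp), Finset.sum_singleton]

lemma biUnion01 (f : ℤ → Finset ℤ) : (Finset.Icc (0:ℤ) 1).biUnion f = f 0 ∪ f 1 := by
  rw [Icc01, Finset.biUnion_insert, Finset.singleton_biUnion]

/-- for a rigid `C`-datum, `k ∈ {0,1}`, and `X_{i+j} ≠ ∅` for `0 ≤ j ≤ k`:
(a) `|𝖱_i ∪ … ∪ 𝖱_{i+k}| ≥ Σ m_{i+j}`, strict when `k = 1` and `i` even;
(b) `|𝖡_i ∪ … ∪ 𝖡_{i+k}| ≥ Σ m_{i+j}`, strict when `k = 1` and `i` odd. -/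
theorem stmt7 {S : NakSetup} (D : CDatum S) (hrig : D.Rigid) (i k : ℤ)
    (hk : k = 0 ∨ k = 1) (h2i : 2 ≤ i) (hikp : i + k ≤ S.p)
    (hne : ∀ j, 0 ≤ j → j ≤ k → (D.X (i + j)).Nonempty) :
    ((∑ j ∈ Finset.Icc (0 : ℤ) k, D.m (i + j)
        ≤ ((((Finset.Icc (0 : ℤ) k).biUnion fun j => D.RI (i + j)).card : ℤ))) ∧
      (k = 1 → Even i →
        ∑ j ∈ Finset.Icc (0 : ℤ) k, D.m (i + j)
          < ((((Finset.Icc (0 : ℤ) k).biUnion fun j => D.RI (i + j)).card : ℤ)))) ∧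
    ((∑ j ∈ Finset.Icc (0 : ℤ) k, D.m (i + j)
        ≤ ((((Finset.Icc (0 : ℤ) k).biUnion fun j => D.BI (i + j)).card : ℤ))) ∧
      (k = 1 → Odd i →
        ∑ j ∈ Finset.Icc (0 : ℤ) k, D.m (i + j)
          < ((((Finset.Icc (0 : ℤ) k).biUnion fun j => D.BI (i + j)).card : ℤ)))) := by
  have hl2 := S.hl
  have hdl := aux_dl (S := S)
  have hXi : (D.X i).Nonempty := by
    have := hne 0 le_rfl (by omega); rwa [add_zero] at this
  obtain ⟨hlo1, hlohi, hhil, hmle⟩ := aux_facts D i hXi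
  rcases hk with rfl | rfl
  · -- k = 0
    rw [sum00 (fun j => D.m (i + j)), biUnion00 (fun j => D.RI (i + j)),
      biUnion00 (fun j => D.BI (i + j))]
    simp only [add_zero]
    rcases Int.even_or_odd i with hpar | hpar
    · rw [D.RI_even hpar, D.BI_even hpar]
      have hcR := aux_card_Icc (S.s (i - 1)) (S.s (i - 1) + (S.l - D.lo i) - 1)
      have hcB := aux_card_Icc (S.s i - D.hi i + 1) (S.s i)
      exact ⟨⟨by omega, fun h => absurd h (by norm_num)⟩,
        ⟨by omega, fun h => absurd h (by norm_num)⟩⟩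
    · rw [D.RI_odd hpar, D.BI_odd hpar]
      have hcR := aux_card_Icc (S.s (i - 1) - (S.l - D.lo i) + 1) (S.s (i - 1))
      have hcB := aux_card_Icc (S.s i) (S.s i + D.hi i - 1)
      exact ⟨⟨by omega, fun h => absurd h (by norm_num)⟩,
        ⟨by omega, fun h => absurd h (by norm_num)⟩⟩
  · -- k = 1
    have hXi1 : (D.X (i + 1)).Nonempty := hne 1 (by norm_num) le_rfl
    obtain ⟨hlo1', hlohi', hhil', hmle'⟩ := aux_facts D (i + 1) hXi1
    have hip : i + 1 ≤ S.p := hikp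
    rw [sum01 (fun j => D.m (i + j)), biUnion01 (fun j => D.RI (i + j)),
      biUnion01 (fun j => D.BI (i + j))]
    simp only [add_zero]
    rcases Int.even_or_odd i with hpar | hpar
    · -- i even
      have hodd1 : Odd (i + 1) := by
        rw [Int.odd_iff]; rw [Int.even_iff] at hpar; omega
      have hb2 := (hrig.2.2.1 i h2i (by omega) hpar).1
      have hgE := aux_s_even (S := S) i h2i (by omega) hpar
      have hgap : S.l ≤ S.s i - S.s (i - 1) := by linarith [hdl.1]
      have hgO := aux_s_odd (S := S) (i + 1) (by omega) hip hodd1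
      rw [show i + 1 - 1 = i by ring] at hgO
      have hgap2 : 2 ≤ S.s (i + 1) - S.s i := by linarith [hdl.2]
      rw [D.RI_even hpar, D.RI_odd hodd1, D.BI_even hpar, D.BI_odd hodd1,
        show i + 1 - 1 = i by ring]
      have hcR := aux_card_union' (S.s (i - 1)) (S.s (i - 1) + (S.l - D.lo i) - 1)
        (S.s i - (S.l - D.lo (i + 1)) + 1) (S.s i) (S.l - 2) (by omega) (by omega)
      have hcB := aux_card_union' (S.s i - D.hi i + 1) (S.s i)
        (S.s (i + 1)) (S.s (i + 1) + D.hi (i + 1) - 1) 0 le_rfl (by omega)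
      exact ⟨⟨by omega, fun _ _ => by omega⟩,
        ⟨by omega, fun _ ho => absurd hpar (Int.not_even_iff_odd.mpr ho)⟩⟩
    · -- i odd
      have heven1 : Even (i + 1) := by
        rw [Int.even_iff]; rw [Int.odd_iff] at hpar; omega
      have hb1 := hrig.2.1 i h2i (by omega) hpar
      have hgE := aux_s_even (S := S) (i + 1) (by omega) hip heven1
      rw [show i + 1 - 1 = i by ring] at hgE
      have hgap : S.l ≤ S.s (i + 1) - S.s i := by linarith [hdl.1]
      have hgO := aux_s_odd (S := S) i h2i (by omega) hpar
      have hgap2 : 2 ≤ S.s i - S.s (i - 1) := by linarith [hdl.2]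
      rw [D.RI_odd hpar, D.RI_even heven1, D.BI_odd hpar, D.BI_even heven1,
        show i + 1 - 1 = i by ring]
      have hcR := aux_card_union' (S.s (i - 1) - (S.l - D.lo i) + 1) (S.s (i - 1))
        (S.s i) (S.s i + (S.l - D.lo (i + 1)) - 1) 0 le_rfl (by omega)
      have hcB := aux_card_union' (S.s i) (S.s i + D.hi i - 1)
        (S.s (i + 1) - D.hi (i + 1) + 1) (S.s (i + 1)) (S.l - 2) (by omega) (by omega)
      have hll := hb1.2.1
      exact ⟨⟨by omega, fun _ he => absurd he (Int.not_even_iff_odd.mpr hpar)⟩,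
        ⟨by omega, fun _ _ => by omega⟩⟩
end

section
/- Let (X_i, R, B) be a C-datum with diagonal partition (T_1, …, T_k), let 1 ≤ j ≤ k − 1, and write T_j = [α_1, α_2] and T_{j+1} = [β_1, β_2]. Then Ξ(T_j) ∩ Ξ(T_{j+1}) ≠ ∅ if and only if d = 2, β_1 = α_2 + 2, α_2 and β_1 are both odd, and n_{α_2} > l_{α_2+2} + 1. -/
open scoped Classical

private lemma s_odd' (S : NakSetup) {i : ℤ} (h1 : 1 ≤ i) (h2 : i ≤ S.p) (h3 : i % 2 = 1) :
    2 * S.s i = (i - 1) * ((S.d - 1) * S.l + 2) + 2 := by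
  have := S.hs_odd i h1 h2 (Int.odd_iff.mpr h3)
  linear_combination this

private lemma s_even' (S : NakSetup) {i : ℤ} (h1 : 1 ≤ i) (h2 : i ≤ S.p) (h3 : i % 2 = 0) :
    2 * S.s i = (i - 1) * ((S.d - 1) * S.l + 2) + S.l := by
  exact S.hs_even i h1 h2 (Int.even_iff.mpr h3)

private lemma lo_bounds {S : NakSetup} (D : CDatum S) {i : ℤ} (h : (D.X i).Nonempty) :
    1 ≤ D.lo i ∧ D.lo i ≤ S.l - 1 := by
  rw [CDatum.lo, dif_pos h]
  have := D.hX i (Finset.min'_mem _ h)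
  rwa [Finset.mem_Icc] at this

private lemma hi_bounds {S : NakSetup} (D : CDatum S) {i : ℤ} (h : (D.X i).Nonempty) :
    1 ≤ D.hi i ∧ D.hi i ≤ S.l - 1 := by
  rw [CDatum.hi, dif_pos h]
  have := D.hX i (Finset.max'_mem _ h)
  rwa [Finset.mem_Icc] at this

set_option maxHeartbeats 1000000 in
/-- for consecutive intervals `T_j = [a₁, a₂]` and `T_{j+1} = [b₁, b₂]`
of the diagonal partition of a `C`-datum, `Ξ(T_j) ∩ Ξ(T_{j+1}) ≠ ∅` holds if and only if
`d = 2`, `b₁ = a₂ + 2`, both `a₂` and `b₁` are odd, and `n_{a₂} > l_{a₂+2} + 1`. -/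
theorem stmt9 {S : NakSetup} (D : CDatum S) (a₁ a₂ b₁ b₂ : ℤ)
    (hcons : D.ConsecBlocks a₁ a₂ b₁ b₂) :
    (D.Xi a₁ (a₂ - a₁) ∩ D.Xi b₁ (b₂ - b₁)).Nonempty ↔
      (S.d = 2 ∧ b₁ = a₂ + 2 ∧ Odd a₂ ∧ Odd b₁ ∧ D.lo (a₂ + 2) + 1 < D.hi a₂) := by
  obtain ⟨⟨ha1, ha2p, ha12, haX, haXl, haXr⟩, ⟨hb1g, hb2p, hb12, hbX, hbXl, hbXr⟩, hab, hmid⟩ :=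
    hcons
  have hXb₁ : (D.X b₁).Nonempty := hbX b₁ le_rfl hb12
  have hXa₂ : (D.X a₂).Nonempty := haX a₂ ha12 le_rfl
  have hXa₁ : (D.X a₁).Nonempty := haX a₁ le_rfl ha12
  have hXb₂ : (D.X b₂).Nonempty := hbX b₂ hb12 le_rfl
  have hgap : a₂ + 2 ≤ b₁ := by
    rcases eq_or_lt_of_le (by omega : a₂ + 1 ≤ b₁) with h | h
    · exact absurd (h ▸ haXr) hXb₁.ne_empty
    · omega
  obtain ⟨hlo1, hlo1'⟩ := lo_bounds D hXa₁
  obtain ⟨hhi2, hhi2'⟩ := hi_bounds D hXa₂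
  obtain ⟨hloB, hloB'⟩ := lo_bounds D hXb₁
  obtain ⟨hhiB, hhiB'⟩ := hi_bounds D hXb₂
  have hl := S.hl
  have hd := S.hd
  have hQ : S.l + 2 ≤ (S.d - 1) * S.l + 2 := by nlinarith
  -- the four `s`-values we need, doubled, by parity
  have H1 : D.xiLo a₁ ≤ D.xiHi a₂ := by
    rw [CDatum.xiLo, CDatum.xiHi]
    rcases Int.even_or_odd a₁ with h1 | h1 <;> rcases Int.even_or_odd a₂ with h2 | h2 <;>
      [rw [Int.even_iff] at h1 h2; (rw [Int.even_iff] at h1; rw [Int.odd_iff] at h2);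
       (rw [Int.odd_iff] at h1; rw [Int.even_iff] at h2); rw [Int.odd_iff] at h1 h2]
    · rw [if_neg (by rw [Int.odd_iff]; omega), if_pos (by rw [Int.even_iff]; omega)]
      have s1 := s_odd' S (i := a₁ - 1) (by omega) (by omega) (by omega)
      have s2 := s_even' S (i := a₂) (by omega) (by omega) h2
      nlinarith [mul_nonneg (by omega : (0:ℤ) ≤ a₂ - a₁) (by linarith : (0:ℤ) ≤ (S.d - 1) * S.l + 2)]
    · rw [if_neg (by rw [Int.odd_iff]; omega), if_neg (by rw [Int.even_iff]; omega)]
      have s1 := s_odd' S (i := a₁ - 1) (by omega) (by omega) (by omega)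
      have s2 := s_odd' S (i := a₂) (by omega) (by omega) h2
      nlinarith [mul_nonneg (by omega : (0:ℤ) ≤ a₂ - a₁) (by linarith : (0:ℤ) ≤ (S.d - 1) * S.l + 2)]
    · rw [if_pos (by rw [Int.odd_iff]; omega), if_pos (by rw [Int.even_iff]; omega)]
      have s1 := s_even' S (i := a₁ - 1) (by omega) (by omega) (by omega)
      have s2 := s_even' S (i := a₂) (by omega) (by omega) h2
      nlinarith [mul_nonneg (by omega : (0:ℤ) ≤ a₂ - a₁) (by linarith : (0:ℤ) ≤ (S.d - 1) * S.l + 2)]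
    · rw [if_pos (by rw [Int.odd_iff]; omega), if_neg (by rw [Int.even_iff]; omega)]
      have s1 := s_even' S (i := a₁ - 1) (by omega) (by omega) (by omega)
      have s2 := s_odd' S (i := a₂) (by omega) (by omega) h2
      nlinarith [mul_nonneg (by omega : (0:ℤ) ≤ a₂ - a₁) (by linarith : (0:ℤ) ≤ (S.d - 1) * S.l + 2)]
  have H2 : D.xiHi a₂ ≤ D.xiHi b₂ := by
    rw [CDatum.xiHi, CDatum.xiHi]
    rcases Int.even_or_odd a₂ with h2 | h2 <;> rcases Int.even_or_odd b₂ with h3 | h3 <;>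
      [rw [Int.even_iff] at h2 h3; (rw [Int.even_iff] at h2; rw [Int.odd_iff] at h3);
       (rw [Int.odd_iff] at h2; rw [Int.even_iff] at h3); rw [Int.odd_iff] at h2 h3]
    · rw [if_pos (by rw [Int.even_iff]; omega), if_pos (by rw [Int.even_iff]; omega)]
      have s1 := s_even' S (i := a₂) (by omega) (by omega) h2
      have s2 := s_even' S (i := b₂) (by omega) (by omega) h3
      nlinarith [mul_nonneg (by omega : (0:ℤ) ≤ b₂ - a₂ - 2) (by linarith : (0:ℤ) ≤ (S.d - 1) * S.l + 2)]
    · rw [if_pos (by rw [Int.even_iff]; omega), if_neg (by rw [Int.even_iff]; omega)]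
      have s1 := s_even' S (i := a₂) (by omega) (by omega) h2
      have s2 := s_odd' S (i := b₂) (by omega) (by omega) h3
      nlinarith [mul_nonneg (by omega : (0:ℤ) ≤ b₂ - a₂ - 2) (by linarith : (0:ℤ) ≤ (S.d - 1) * S.l + 2)]
    · rw [if_neg (by rw [Int.even_iff]; omega), if_pos (by rw [Int.even_iff]; omega)]
      have s1 := s_odd' S (i := a₂) (by omega) (by omega) h2
      have s2 := s_even' S (i := b₂) (by omega) (by omega) h3
      nlinarith [mul_nonneg (by omega : (0:ℤ) ≤ b₂ - a₂ - 2) (by linarith : (0:ℤ) ≤ (S.d - 1) * S.l + 2)]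
    · rw [if_neg (by rw [Int.even_iff]; omega), if_neg (by rw [Int.even_iff]; omega)]
      have s1 := s_odd' S (i := a₂) (by omega) (by omega) h2
      have s2 := s_odd' S (i := b₂) (by omega) (by omega) h3
      nlinarith [mul_nonneg (by omega : (0:ℤ) ≤ b₂ - a₂ - 2) (by linarith : (0:ℤ) ≤ (S.d - 1) * S.l + 2)]
  have key : (D.xiLo b₁ ≤ D.xiHi a₂) ↔
      (S.d = 2 ∧ b₁ = a₂ + 2 ∧ Odd a₂ ∧ Odd b₁ ∧ D.lo (a₂ + 2) + 1 < D.hi a₂) := by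
    rw [CDatum.xiLo, CDatum.xiHi]
    rcases Int.even_or_odd a₂ with h2 | h2 <;> rcases Int.even_or_odd b₁ with h3 | h3
    · -- a₂ even, b₁ even : both sides false
      rw [if_neg (by rw [Int.not_odd_iff_even]; exact h3),
        if_pos h2]
      rw [Int.even_iff] at h2 h3
      have s1 := s_even' S (i := a₂) (by omega) (by omega) h2
      have s2 := s_odd' S (i := b₁ - 1) (by omega) (by omega) (by omega)
      constructor
      · intro h
        exfalso
        nlinarith [mul_nonneg (by omega : (0:ℤ) ≤ b₁ - a₂ - 2) (by linarith : (0:ℤ) ≤ (S.d - 1) * S.l + 2)]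
      · rintro ⟨-, -, hodd, -, -⟩
        rw [Int.odd_iff] at hodd; omega
    · -- a₂ even, b₁ odd : both sides false
      rw [if_pos h3, if_pos h2]
      rw [Int.even_iff] at h2; rw [Int.odd_iff] at h3
      have s1 := s_even' S (i := a₂) (by omega) (by omega) h2
      have s2 := s_even' S (i := b₁ - 1) (by omega) (by omega) (by omega)
      constructor
      · intro h
        exfalso
        nlinarith [mul_nonneg (by omega : (0:ℤ) ≤ b₁ - a₂ - 3) (by linarith : (0:ℤ) ≤ (S.d - 1) * S.l + 2)]
      · rintro ⟨-, -, hodd, -, -⟩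
        rw [Int.odd_iff] at hodd; omega
    · -- a₂ odd, b₁ even : both sides false
      rw [if_neg (by rw [Int.not_odd_iff_even]; exact h3),
        if_neg (by rw [Int.not_even_iff_odd]; exact h2)]
      rw [Int.odd_iff] at h2; rw [Int.even_iff] at h3
      have s1 := s_odd' S (i := a₂) (by omega) (by omega) h2
      have s2 := s_odd' S (i := b₁ - 1) (by omega) (by omega) (by omega)
      constructor
      · intro h
        exfalso
        nlinarith [mul_nonneg (by omega : (0:ℤ) ≤ b₁ - a₂ - 3) (by linarith : (0:ℤ) ≤ (S.d - 1) * S.l + 2)]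
      · rintro ⟨-, -, -, hodd, -⟩
        rw [Int.odd_iff] at hodd; omega
    · -- a₂ odd, b₁ odd
      rw [if_pos h3, if_neg (by rw [Int.not_even_iff_odd]; exact h2)]
      have h2' := Int.odd_iff.mp h2
      have h3' := Int.odd_iff.mp h3
      have s1 := s_odd' S (i := a₂) (by omega) (by omega) h2'
      have s2 := s_even' S (i := b₁ - 1) (by omega) (by omega) (by omega)
      rcases eq_or_lt_of_le hgap with heq | hlt
      · -- b₁ = a₂ + 2 : the interesting case
        subst heq
        have e1 : a₂ + 2 - 1 = a₂ + 1 := by ring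
        rw [e1] at s2
        constructor
        · intro h
          rw [e1] at h
          -- doubled relation
          have hrel : (S.d - 1) * S.l + 2 - S.l + 2 * D.lo (a₂ + 2) + 2 ≤ 2 * D.hi a₂ := by
            linarith
          have hd2 : S.d = 2 := by
            by_contra hne
            have hd3 : 3 ≤ S.d := by omega
            rcases S.hcase with hl2 | ⟨-, hde, -⟩
            · have hq4 : 4 ≤ (S.d - 1) * S.l := by rw [hl2]; linarith
              linarith
            · have hd4 : 4 ≤ S.d := by rw [Int.even_iff] at hde; omega
              have hq3 : 3 * S.l ≤ (S.d - 1) * S.l :=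
                mul_le_mul_of_nonneg_right (by omega) (by linarith)
              linarith
          have hql : (S.d - 1) * S.l = S.l := by rw [hd2]; ring
          exact ⟨hd2, rfl, h2, h3, by linarith⟩
        · rintro ⟨hd2, -, -, -, hlt'⟩
          rw [e1]
          have hql : (S.d - 1) * S.l = S.l := by rw [hd2]; ring
          linarith
      · -- b₁ ≥ a₂ + 4 : both sides false
        constructor
        · intro h
          exfalso
          nlinarith [mul_nonneg (by omega : (0:ℤ) ≤ b₁ - a₂ - 4) (by linarith : (0:ℤ) ≤ (S.d - 1) * S.l + 2)]
        · rintro ⟨-, heq, -, -, -⟩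
          omega
  -- put things together
  simp only [CDatum.Xi, show a₁ + (a₂ - a₁) = a₂ from by ring,
    show b₁ + (b₂ - b₁) = b₂ from by ring, Finset.Nonempty, Finset.mem_inter, Finset.mem_Icc]
  constructor
  · rintro ⟨x, ⟨-, hx2⟩, hx3, -⟩
    exact key.mp (le_trans hx3 hx2)
  · intro h
    exact ⟨D.xiHi a₂, ⟨H1, le_refl _⟩, key.mpr h, H2⟩
end
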